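/- arXiv:2503.02613 — 10 statements merged into one kernel-verified Lean document; each statement's English description precedes it below -/
import Mathlib

section
/- Let K₀, K₁, K₂ be nonempty compact convex subsets of ℝⁿ with δ(K₀,K₁) + δ(K₁,K₂) = δ(K₀,K₂), where δ is the Hausdorff distance. If neither K₀ nor K₂ is a singleton, then K₁ is not a singleton. -/
open Metric

lemma aux_infDist_lt {n : ℕ} {K : Set (EuclideanSpace ℝ (Fin n))}
    (hK : K.Nonempty) (hv : Convex ℝ K) (hns : ¬ ∃ q, K = {q})
    (p : EuclideanSpace ℝ (Fin n))
    (hfin : EMetric.hausdorffEdist K {p} ≠ ⊤) :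
    infDist p K < hausdorffDist K {p} := by
  obtain ⟨a, ha⟩ := hK
  have hne : ∃ b ∈ K, b ≠ a := by
    by_contra h
    push_neg at h
    exact hns ⟨a, Set.eq_singleton_iff_unique_mem.mpr ⟨ha, h⟩⟩
  obtain ⟨b, hb, hba⟩ := hne
  have hda : dist a p ≤ hausdorffDist K {p} := by
    have := infDist_le_hausdorffDist_of_mem ha hfin
    rwa [infDist_singleton] at this
  have hdb : dist b p ≤ hausdorffDist K {p} := by
    have := infDist_le_hausdorffDist_of_mem hb hfin
    rwa [infDist_singleton] at this
  rcases lt_or_eq_of_le hda with h | h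
  · exact lt_of_le_of_lt ((dist_comm p a ▸ infDist_le_dist_of_mem ha)) h
  rcases lt_or_eq_of_le hdb with h' | h'
  · exact lt_of_le_of_lt ((dist_comm p b ▸ infDist_le_dist_of_mem hb)) h'
  -- both distances equal R
  have hab : dist a p = dist b p := h.trans h'.symm
  have hm : midpoint ℝ a b ∈ K := hv.segment_subset ha hb (midpoint_mem_segment a b)
  have hlt : dist (midpoint ℝ a b) p < dist a p := by
    have key : ‖(1 / 2 : ℝ) • ((a - p) + (b - p))‖ < ‖a - p‖ := by
      rw [norm_midpoint_lt_iff (by rw [← dist_eq_norm, ← dist_eq_norm, hab])]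
      intro hcon
      apply hba
      have h3 : a - p = b - p := hcon
      have h4 := congrArg (· + p) h3
      simp only [sub_add_cancel] at h4
      exact h4.symm
    have : midpoint ℝ a b - p = (1 / 2 : ℝ) • ((a - p) + (b - p)) := by
      rw [midpoint_eq_smul_add, invOf_eq_inv]
      module
    rw [dist_eq_norm, dist_eq_norm, this]
    exact key
  calc infDist p K ≤ dist p (midpoint ℝ a b) := infDist_le_dist_of_mem hm
    _ = dist (midpoint ℝ a b) p := dist_comm _ _
    _ < dist a p := hlt
    _ = hausdorffDist K {p} := h

theorem stmt2 {n : ℕ} (K₀ K₁ K₂ : Set (EuclideanSpace ℝ (Fin n)))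
    (h₀ : K₀.Nonempty) (h₁ : K₁.Nonempty) (h₂ : K₂.Nonempty)
    (hc₀ : IsCompact K₀) (hc₁ : IsCompact K₁) (hc₂ : IsCompact K₂)
    (hv₀ : Convex ℝ K₀) (hv₁ : Convex ℝ K₁) (hv₂ : Convex ℝ K₂)
    (hsum : Metric.hausdorffDist K₀ K₁ + Metric.hausdorffDist K₁ K₂ =
      Metric.hausdorffDist K₀ K₂)
    (hn₀ : ¬ ∃ p, K₀ = {p}) (hn₂ : ¬ ∃ p, K₂ = {p}) :
    ¬ ∃ p, K₁ = {p} := by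
  rintro ⟨p, rfl⟩
  have hsp : ({p} : Set (EuclideanSpace ℝ (Fin n))).Nonempty := ⟨p, rfl⟩
  have hfin₀ : EMetric.hausdorffEdist K₀ ({p} : Set (EuclideanSpace ℝ (Fin n))) ≠ ⊤ :=
    hausdorffEdist_ne_top_of_nonempty_of_bounded h₀ hsp hc₀.isBounded (Bornology.isBounded_singleton)
  have hfin₂ : EMetric.hausdorffEdist K₂ ({p} : Set (EuclideanSpace ℝ (Fin n))) ≠ ⊤ :=
    hausdorffEdist_ne_top_of_nonempty_of_bounded h₂ hsp hc₂.isBounded (Bornology.isBounded_singleton)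
  set R₀ := hausdorffDist K₀ ({p} : Set (EuclideanSpace ℝ (Fin n))) with hR₀
  set R₂ := hausdorffDist K₂ ({p} : Set (EuclideanSpace ℝ (Fin n))) with hR₂
  have h0lt : infDist p K₀ < R₀ := aux_infDist_lt h₀ hv₀ hn₀ p hfin₀
  have h2lt : infDist p K₂ < R₂ := aux_infDist_lt h₂ hv₂ hn₂ p hfin₂
  have hkey : hausdorffDist K₀ K₂ ≤ max (R₀ + infDist p K₂) (infDist p K₀ + R₂) := by
    apply hausdorffDist_le_of_infDist
    · exact le_max_of_le_left (add_nonneg hausdorffDist_nonneg infDist_nonneg)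
    · intro x hx
      refine le_max_of_le_left ?_
      calc infDist x K₂ ≤ infDist p K₂ + dist x p := infDist_le_infDist_add_dist
        _ ≤ infDist p K₂ + R₀ := by
            have := infDist_le_hausdorffDist_of_mem hx hfin₀
            rw [infDist_singleton] at this
            linarith
        _ = R₀ + infDist p K₂ := add_comm _ _
    · intro y hy
      refine le_max_of_le_right ?_
      calc infDist y K₀ ≤ infDist p K₀ + dist y p := infDist_le_infDist_add_dist
        _ ≤ infDist p K₀ + R₂ := by
            have := infDist_le_hausdorffDist_of_mem hy hfin₂
            rw [infDist_singleton] at this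
            linarith
  have hlt : hausdorffDist K₀ K₂ < R₀ + R₂ := by
    refine lt_of_le_of_lt hkey ?_
    exact max_lt (by linarith) (by linarith)
  rw [← hsum] at hlt
  have e2 : hausdorffDist ({p} : Set (EuclideanSpace ℝ (Fin n))) K₂ = R₂ :=
    hausdorffDist_comm
  rw [e2] at hlt
  exact lt_irrefl _ hlt
end

section
/- For any K in 𝒮ₙ (a nonempty intersection of translates of the Euclidean unit ball), K equals the intersection over all x ∈ ℝⁿ of the balls x + δ({x}, K)·B₂ⁿ, where δ denotes Hausdorff distance. -/
def IsBallBody {n : ℕ} (K : Set (EuclideanSpace ℝ (Fin n))) : Prop :=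
  K.Nonempty ∧ ∃ C : Set (EuclideanSpace ℝ (Fin n)), C.Nonempty ∧
    K = ⋂ x ∈ C, Metric.closedBall x 1

theorem stmt3 {n : ℕ} (K : Set (EuclideanSpace ℝ (Fin n))) (hK : IsBallBody K) :
    K = ⋂ x : EuclideanSpace ℝ (Fin n),
      Metric.closedBall x (Metric.hausdorffDist {x} K) := by
  obtain ⟨hne, C, hCne, hKC⟩ := hK
  obtain ⟨c, hc⟩ := hCne
  have hKsub : ∀ x ∈ C, K ⊆ Metric.closedBall x 1 := by
    intro x hx
    rw [hKC]
    exact Set.biInter_subset_of_mem hx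
  have hKbdd : Bornology.IsBounded K :=
    (Metric.isBounded_closedBall).subset (hKsub c hc)
  have hedist : ∀ x : EuclideanSpace ℝ (Fin n),
      EMetric.hausdorffEdist ({x} : Set (EuclideanSpace ℝ (Fin n))) K ≠ ⊤ := by
    intro x
    exact Metric.hausdorffEdist_ne_top_of_nonempty_of_bounded
      (Set.singleton_nonempty x) hne Bornology.isBounded_singleton hKbdd
  apply Set.Subset.antisymm
  · intro y hy
    refine Set.mem_iInter.2 fun x => ?_
    have : Metric.infDist y ({x} : Set (EuclideanSpace ℝ (Fin n)))
        ≤ Metric.hausdorffDist K ({x} : Set (EuclideanSpace ℝ (Fin n))) :=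
      Metric.infDist_le_hausdorffDist_of_mem hy
        (by rw [EMetric.hausdorffEdist_comm]; exact hedist x)
    rw [Metric.infDist_singleton] at this
    simpa [Metric.mem_closedBall, Metric.hausdorffDist_comm] using this
  · intro y hy
    rw [hKC]
    refine Set.mem_iInter₂.2 fun x hx => ?_
    have h1 : Metric.hausdorffDist ({x} : Set (EuclideanSpace ℝ (Fin n))) K ≤ 1 := by
      apply Metric.hausdorffDist_le_of_mem_dist zero_le_one
      · intro a ha
        obtain ⟨k, hk⟩ := hne
        refine ⟨k, hk, ?_⟩
        rw [Set.mem_singleton_iff] at ha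
        rw [ha]
        have := hKsub x hx hk
        rw [Metric.mem_closedBall] at this
        simpa [dist_comm] using this
      · intro k hk
        refine ⟨x, Set.mem_singleton x, ?_⟩
        have := hKsub x hx hk
        rwa [Metric.mem_closedBall] at this
    have h2 := Set.mem_iInter.1 hy x
    rw [Metric.mem_closedBall] at *
    exact le_trans h2 h1
end

section
/- Let A ⊆ ℝⁿ be a connected set with nonempty interior and f : A → ℝⁿ a distance-preserving map. Then there exists an affine isometry F : ℝⁿ → ℝⁿ with f = F restricted to A. -/
open scoped RealInnerProductSpace

theorem stmt4 {n : ℕ} (A : Set (EuclideanSpace ℝ (Fin n)))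
    (hA : IsConnected A) (hint : (interior A).Nonempty)
    (f : EuclideanSpace ℝ (Fin n) → EuclideanSpace ℝ (Fin n))
    (hf : ∀ x ∈ A, ∀ y ∈ A, dist (f x) (f y) = dist x y) :
    ∃ F : EuclideanSpace ℝ (Fin n) →ᵃⁱ[ℝ] EuclideanSpace ℝ (Fin n),
      ∀ x ∈ A, f x = F x := by
  classical
  obtain ⟨c, hc⟩ := hint
  obtain ⟨r, hr, hball⟩ := Metric.isOpen_iff.1 isOpen_interior c hc
  have hBA : Metric.ball c r ⊆ A := hball.trans interior_subset
  set s : ℝ := r / 2 with hs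
  have hs0 : 0 < s := by positivity
  have hcA : c ∈ A := hBA (Metric.mem_ball_self hr)
  set e : Fin n → EuclideanSpace ℝ (Fin n) := fun i => EuclideanSpace.single i (1:ℝ) with he
  have hee : ∀ i j, ⟪e i, e j⟫ = if i = j then (1:ℝ) else 0 := by
    intro i j
    rw [he]
    simp only [EuclideanSpace.inner_single_left, map_one, one_mul, EuclideanSpace.single_apply]
  set p : Fin n → EuclideanSpace ℝ (Fin n) := fun i => c + s • e i with hp
  have hpc : ∀ i, p i - c = s • e i := fun i => by simp [hp]
  have hpA : ∀ i, p i ∈ A := by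
    intro i
    apply hBA
    have : dist (p i) c = s := by
      rw [dist_eq_norm, hp]
      simp [norm_smul, abs_of_pos hs0, he, EuclideanSpace.norm_single]
    rw [Metric.mem_ball, this, hs]
    linarith
  have hnorm : ∀ x ∈ A, ∀ y ∈ A, ‖f x - f y‖ = ‖x - y‖ := by
    intro x hx y hy
    rw [← dist_eq_norm, ← dist_eq_norm, hf x hx y hy]
  set g : EuclideanSpace ℝ (Fin n) → EuclideanSpace ℝ (Fin n) := fun x => f x - f c with hg
  have hgnorm : ∀ x ∈ A, ∀ y ∈ A, ‖g x - g y‖ = ‖x - y‖ := by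
    intro x hx y hy
    have : g x - g y = f x - f y := by simp [hg]
    rw [this, hnorm x hx y hy]
  have hgn : ∀ x ∈ A, ‖g x‖ = ‖x - c‖ := fun x hx => hnorm x hx c hcA
  have hginner : ∀ x ∈ A, ∀ y ∈ A, ⟪g x, g y⟫ = ⟪x - c, y - c⟫ := by
    intro x hx y hy
    have h1 := norm_sub_sq_real (g x) (g y)
    have h2 := norm_sub_sq_real (x - c) (y - c)
    have h3 : (x - c) - (y - c) = x - y := by abel
    rw [h3] at h2
    rw [hgnorm x hx y hy, hgn x hx, hgn y hy] at h1
    linarith [h1, h2]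
  set v : Fin n → EuclideanSpace ℝ (Fin n) := fun i => s⁻¹ • g (p i) with hv
  have hvinner : ∀ i j, ⟪v i, v j⟫ = if i = j then (1:ℝ) else 0 := by
    intro i j
    have h0 : ⟪v i, v j⟫ = s⁻¹ * (s⁻¹ * ⟪g (p i), g (p j)⟫) := by
      simp only [hv]
      rw [real_inner_smul_left, real_inner_smul_right]
    rw [h0, hginner _ (hpA i) _ (hpA j), hpc i, hpc j,
      real_inner_smul_left, real_inner_smul_right, hee i j]
    field_simp
  have hvon : Orthonormal ℝ v := by
    rw [orthonormal_iff_ite]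
    intro i j
    simpa using hvinner i j
  have hspan : ⊤ ≤ Submodule.span ℝ (Set.range v) := by
    rw [hvon.linearIndependent.span_eq_top_of_card_eq_finrank'
      (by simp [finrank_euclideanSpace_fin])]
  set b : OrthonormalBasis (Fin n) ℝ (EuclideanSpace ℝ (Fin n)) :=
    OrthonormalBasis.mk hvon hspan with hb
  have hbv : ∀ i, b i = v i := fun i => by
    rw [hb]; exact congrFun (OrthonormalBasis.coe_mk hvon hspan) i
  have key : ∀ x ∈ A, g x = b.repr.symm (x - c) := by
    intro x hx
    apply b.repr.injective
    rw [LinearIsometryEquiv.apply_symm_apply]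
    ext i
    rw [b.repr_apply_apply, hbv i]
    have h1 : ⟪v i, g x⟫ = s⁻¹ * ⟪g (p i), g x⟫ := by
      simp only [hv]
      rw [real_inner_smul_left]
    rw [h1, hginner _ (hpA i) _ hx, hpc i, real_inner_smul_left]
    have h2 : ⟪e i, x - c⟫ = (x - c) i := by
      rw [he]
      simp [EuclideanSpace.inner_single_left]
    rw [h2]
    field_simp
  set L : EuclideanSpace ℝ (Fin n) ≃ₗᵢ[ℝ] EuclideanSpace ℝ (Fin n) := b.repr.symm with hL
  refine ⟨⟨AffineMap.mk' (fun x => L (x - c) + f c) L.toLinearEquiv.toLinearMap c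
    (fun x => by simp), fun x => by simp⟩, ?_⟩
  intro x hx
  have hkey := key x hx
  simp only [hg] at hkey
  show f x = L (x - c) + f c
  rw [hL, ← hkey]
  abel
end

section
/- The c-duality map K ↦ K^c on 𝒮ₙ is an isometry with respect to the Hausdorff distance: δ(K^c, L^c) = δ(K, L) for all K, L ∈ 𝒮ₙ. -/
open scoped RealInnerProductSpace

def cDual {n : ℕ} (K : Set (EuclideanSpace ℝ (Fin n))) : Set (EuclideanSpace ℝ (Fin n)) :=
  ⋂ x ∈ K, Metric.closedBall x 1

set_option maxHeartbeats 2000000 in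
/-- Supporting ball lemma: if `x₀` minimizes `⟪·, u⟫` over the intersection of closed unit
balls centered at points of `C`, then the whole intersection lies in the unit ball centered
at `x₀ + u`. -/
lemma lemB {E : Type*} [NormedAddCommGroup E] [InnerProductSpace ℝ E]
    {C : Set E} (hC : C.Nonempty) {u x₀ : E} (hu : ‖u‖ = 1)
    (hx₀ : ∀ c ∈ C, dist x₀ c ≤ 1)
    (hmin : ∀ p, (∀ c ∈ C, dist p c ≤ 1) → ⟪x₀, u⟫ ≤ ⟪p, u⟫)
    {x : E} (hx : ∀ c ∈ C, dist x c ≤ 1) :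
    dist (x₀ + u) x ≤ 1 := by
  set w := x - x₀ with hw
  have main : ‖w‖ ^ 2 ≤ 2 * ⟪w, u⟫ := by
    by_contra hcon
    push_neg at hcon
    have hwu0 : 0 ≤ ⟪w, u⟫ := by
      have h1 := hmin x hx
      have h2 : ⟪w, u⟫ = ⟪x, u⟫ - ⟪x₀, u⟫ := by rw [hw, inner_sub_left]
      linarith
    set s := ‖w‖ with hs
    have hs0 : 0 < s := by
      rcases (norm_nonneg w).lt_or_eq with h | h
      · exact h
      · exfalso
        have hs0' : s = 0 := by rw [hs, ← h]
        rw [hs0'] at hcon; nlinarith only [hcon, hwu0]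
    obtain ⟨c₀, hc₀⟩ := hC
    have hs2 : s ≤ 2 := by
      have h1 := hx₀ c₀ hc₀
      have h2 := hx c₀ hc₀
      have : s = dist x x₀ := by rw [dist_eq_norm]
      have h3 : dist x x₀ ≤ dist x c₀ + dist c₀ x₀ := dist_triangle _ _ _
      rw [dist_comm c₀ x₀] at h3
      linarith
    rcases lt_or_eq_of_le hs2 with hslt | hseq
    · -- main case s < 2
      clear_value w s
      have hne : s ≠ 0 := ne_of_gt hs0
      -- orthonormal pair e₁, e₂ spanning {w, u}
      set e₁ := s⁻¹ • w with he₁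
      have hwe : w = s • e₁ := by rw [he₁, smul_smul]; field_simp; rw [one_smul]
      have he₁n : ⟪e₁, e₁⟫ = 1 := by
        rw [he₁, real_inner_smul_left, real_inner_smul_right, real_inner_self_eq_norm_sq, ← hs]
        field_simp
      clear_value e₁
      set c₁ := ⟪w, u⟫ / s with hc₁def
      have hc₁0 : 0 ≤ c₁ := div_nonneg hwu0 hs0.le
      have hc₁s : c₁ < s / 2 := by
        rw [hc₁def, div_lt_div_iff₀ hs0 two_pos]
        nlinarith only [hcon]
      have he₁u : ⟪e₁, u⟫ = c₁ := by
        rw [he₁, real_inner_smul_left, hc₁def]; ring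
      have hc₁1 : c₁ < 1 := by linarith only [hc₁s, hs2]
      clear_value c₁
      set uP := u - c₁ • e₁ with huP
      have huPn : ‖uP‖ ^ 2 = 1 - c₁ ^ 2 := by
        have h1 : ⟪u, e₁⟫ = c₁ := by rw [real_inner_comm]; exact he₁u
        have h2 : ‖c₁ • e₁‖ ^ 2 = c₁ ^ 2 := by
          have he : ‖e₁‖ ^ 2 = 1 := by rw [← real_inner_self_eq_norm_sq]; exact he₁n
          rw [norm_smul, mul_pow, Real.norm_eq_abs, sq_abs, he, mul_one]
        rw [huP, norm_sub_sq_real, real_inner_smul_right, h1, h2, hu]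
        ring
      set ρ := ‖uP‖ with hρ
      have hρ2 : ρ ^ 2 = 1 - c₁ ^ 2 := huPn
      have hρpos : 0 < ρ := by
        rcases (norm_nonneg uP).lt_or_eq with h | h
        · exact h
        · exfalso; rw [hρ, ← h] at hρ2; nlinarith only [hρ2, hc₁1, hc₁0]
      set e₂ := ρ⁻¹ • uP with he₂
      have hρne : ρ ≠ 0 := ne_of_gt hρpos
      have he₂n : ⟪e₂, e₂⟫ = 1 := by
        rw [he₂, real_inner_smul_left, real_inner_smul_right, real_inner_self_eq_norm_sq, ← hρ]
        field_simp
      have he₁₂ : ⟪e₁, e₂⟫ = 0 := by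
        rw [he₂, real_inner_smul_right, huP, inner_sub_right, real_inner_smul_right]
        rw [he₁u, he₁n]
        ring
      have he₂u : ⟪e₂, u⟫ = ρ := by
        have huPu : ⟪uP, u⟫ = 1 - c₁ ^ 2 := by
          rw [huP, inner_sub_left, real_inner_smul_left, he₁u, real_inner_self_eq_norm_sq, hu]
          ring
        rw [he₂, real_inner_smul_left, huPu, ← hρ2]
        field_simp
      have he₂₁ : ⟪e₂, e₁⟫ = 0 := by rw [real_inner_comm]; exact he₁₂
      clear_value e₂
      have hcombo : ∀ α β γ δ : ℝ, ⟪α • e₁ + β • e₂, γ • e₁ + δ • e₂⟫ = α * γ + β * δ := by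
        intro α β γ δ
        simp only [inner_add_left, inner_add_right, real_inner_smul_left,
          real_inner_smul_right, he₁n, he₂n, he₁₂, he₂₁]
        ring
      clear_value ρ uP
      set H := Real.sqrt (1 - s ^ 2 / 4) with hH
      have hs24 : s ^ 2 < 4 := by nlinarith only [hslt, hs0]
      have hHpos : 0 < H := Real.sqrt_pos.mpr (by linarith only [hs24])
      have hH2 : H ^ 2 = 1 - s ^ 2 / 4 := Real.sq_sqrt (by linarith only [hs24])
      clear_value H
      clear hH
      set a := (-(s/2)) • e₁ + (-H) • e₂ with ha
      set b := H • e₁ + (-(s/2)) • e₂ with hb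
      set a₂ := (s/2) • e₁ + (-H) • e₂ with ha₂
      clear_value a b a₂
      set o := x₀ - a with ho
      have hx₀o : x₀ = o + a := by rw [ho]; abel
      have hxo : x = o + a₂ := by
        have hxw : x = x₀ + w := by rw [hw]; abel
        rw [hxw, hwe, ho, ha, ha₂]; module
      clear_value o
      clear ho
      set T := s / (2 * H) with hT
      have hTpos : 0 < T := by positivity
      have hsT : s = 2 * T * H := by rw [hT]; field_simp
      clear_value T
      clear hT
      set A := ⟪a, u⟫ with hAdef
      set B := ⟪b, u⟫ with hBdef
      have hA : A = -(s/2) * c₁ - H * ρ := by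
        rw [hAdef, ha, inner_add_left, real_inner_smul_left, real_inner_smul_left, he₁u, he₂u]
        ring
      have hB : B = H * c₁ - (s/2) * ρ := by
        rw [hBdef, hb, inner_add_left, real_inner_smul_left, real_inner_smul_left, he₁u, he₂u]
        ring
      clear_value A B
      have hAneg : A < 0 := by
        rw [hA]
        nlinarith only [mul_pos hHpos hρpos, mul_nonneg (by linarith only [hs0] : (0:ℝ) ≤ s/2) hc₁0]
      have hBneg : B < 0 := by
        rw [hB]
        have h5 : c₁ ^ 2 < s ^ 2 / 4 := by
          have := mul_pos (by linarith only [hc₁s] : (0:ℝ) < s/2 - c₁)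
            (by linarith only [hc₁s, hc₁0, hs0] : (0:ℝ) < s/2 + c₁)
          nlinarith only [this]
        have e1 : (H * c₁) ^ 2 = (1 - s^2/4) * c₁ ^ 2 := by rw [mul_pow, hH2]
        have e2 : ((s/2) * ρ) ^ 2 = s^2/4 * (1 - c₁ ^ 2) := by rw [mul_pow, hρ2]; ring
        have h1 : (H * c₁) ^ 2 < ((s/2) * ρ) ^ 2 := by nlinarith only [e1, e2, h5, sq_nonneg c₁]
        have h2 : 0 ≤ H * c₁ := mul_nonneg hHpos.le hc₁0
        nlinarith only [h1, h2, mul_pos (by linarith only [hs0] : (0:ℝ) < s/2) hρpos]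
      set t := min T (B / (2 * A)) with ht
      have htpos : 0 < t := by
        apply lt_min hTpos
        apply div_pos_iff.mpr
        right
        exact ⟨hBneg, by linarith⟩
      have htT : t ≤ T := min_le_left _ _
      have htA : B - t * A ≤ B / 2 := by
        have h1 : t ≤ B / (2 * A) := min_le_right _ _
        have h2 := mul_le_mul_of_nonpos_right h1 hAneg.le
        have hA0 : A ≠ 0 := ne_of_lt hAneg
        have h3 : B / (2 * A) * A = B / 2 := by
          field_simp
        linarith only [h2, h3]
      clear_value t
      clear ht
      set p := o + (1 + t^2)⁻¹ • ((1 - t^2) • a + (2*t) • b) with hp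
      clear_value p
      have h1t : (0:ℝ) < 1 + t^2 := by positivity
      -- Claim 1 : ⟪p, u⟫ < ⟪x₀, u⟫
      have hpx₀ : p - x₀ = (1 + t^2)⁻¹ • ((-(2*t^2)) • a + (2*t) • b) := by
        have e : ((-(2*t^2)) • a + (2*t) • b : E)
            = ((1 - t^2) • a + (2*t) • b) - (1 + t^2) • a := by module
        rw [hp, hx₀o, e, smul_sub, smul_smul, inv_mul_cancel₀ h1t.ne', one_smul]
        abel
      have claim1 : ⟪p, u⟫ < ⟪x₀, u⟫ := by
        have hinner : ⟪p - x₀, u⟫ = (1 + t^2)⁻¹ * ((-(2*t^2)) * A + (2*t) * B) := by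
          rw [hpx₀, real_inner_smul_left, inner_add_left, real_inner_smul_left,
            real_inner_smul_left, ← hAdef, ← hBdef]
        have hlt : (-(2*t^2)) * A + (2*t) * B < 0 := by
          have he : (-(2*t^2)) * A + (2*t) * B = 2 * t * (B - t * A) := by ring
          rw [he]
          exact mul_neg_of_pos_of_neg (by linarith only [htpos]) (by linarith only [htA, hBneg])
        have hsub : ⟪p - x₀, u⟫ < 0 := by
          rw [hinner]
          exact mul_neg_of_pos_of_neg (by positivity) hlt
        rw [inner_sub_left] at hsub
        linarith
      -- Claim 2 : p is in every ball
      have claim2 : ∀ c ∈ C, dist p c ≤ 1 := by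
        intro c hc
        set d := c - o with hd
        set A' := ⟪a, d⟫ with hA'
        set B' := ⟪b, d⟫ with hB'
        set A₂ := ⟪a₂, d⟫ with hA₂
        set κ := ‖d‖ ^ 2 / 2 with hκdef
        have hκ0 : 0 ≤ κ := by positivity
        have han : ‖a‖ ^ 2 = 1 := by
          rw [← real_inner_self_eq_norm_sq, ha, hcombo]; nlinarith only [hH2]
        have ha₂n : ‖a₂‖ ^ 2 = 1 := by
          rw [← real_inner_self_eq_norm_sq, ha₂, hcombo]; nlinarith only [hH2]
        have hbn : ‖b‖ ^ 2 = 1 := by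
          rw [← real_inner_self_eq_norm_sq, hb, hcombo]; nlinarith only [hH2]
        have hab : ⟪a, b⟫ = 0 := by
          rw [ha, hb, hcombo]; ring
        have hA'κ : κ ≤ A' := by
          have h1 : ‖c - x₀‖ ≤ 1 := by rw [← dist_eq_norm, dist_comm]; exact hx₀ c hc
          have e : c - x₀ = d - a := by rw [hd, hx₀o]; abel
          have q : ‖c - x₀‖ ^ 2 = ‖d‖ ^ 2 - 2 * A' + 1 := by
            rw [e, norm_sub_sq_real, han, hA', real_inner_comm a d]
          nlinarith only [q, h1, norm_nonneg (c - x₀), hκdef]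
        have hA₂κ : κ ≤ A₂ := by
          have h1 : ‖c - x‖ ≤ 1 := by rw [← dist_eq_norm, dist_comm]; exact hx c hc
          have e : c - x = d - a₂ := by rw [hd, hxo]; abel
          have q : ‖c - x‖ ^ 2 = ‖d‖ ^ 2 - 2 * A₂ + 1 := by
            rw [e, norm_sub_sq_real, ha₂n, hA₂, real_inner_comm a₂ d]
          nlinarith only [q, h1, norm_nonneg (c - x), hκdef]
        have hrel : (1 + T^2) • a₂ = (1 - T^2) • a + (2*T) • b := by
          rw [ha, hb, ha₂]
          match_scalars
          · linear_combination hsT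
          · linear_combination T * hsT
        have hA₂rel : (1 + T^2) * A₂ = (1 - T^2) * A' + (2*T) * B' := by
          have h := congrArg (fun z => ⟪z, d⟫) hrel
          simpa [inner_add_left, real_inner_smul_left, ← hA', ← hB', ← hA₂] using h
        have hGT : 0 ≤ (1 - T^2) * A' + 2*T * B' - κ * (1 + T^2) := by
          have h4 : 0 ≤ (1 + T^2) * (A₂ - κ) := mul_nonneg (by positivity) (by linarith)
          nlinarith only [hA₂rel, h4]
        have hG : κ * (1 + t^2) ≤ (1 - t^2) * A' + 2*t * B' := by
          have key : T * ((1 - t^2) * A' + 2*t * B' - κ * (1 + t^2)) =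
              (T - t) * (A' - κ) + t * ((1 - T^2) * A' + 2*T * B' - κ * (1 + T^2))
              + (A' + κ) * (t * (T - t)) * T := by ring
          have h1 : 0 ≤ (T - t) * (A' - κ) := mul_nonneg (by linarith only [htT]) (by linarith only [hA'κ])
          have h2 : 0 ≤ t * ((1 - T^2) * A' + 2*T * B' - κ * (1 + T^2)) :=
            mul_nonneg htpos.le hGT
          have h3 : 0 ≤ (A' + κ) * (t * (T - t)) * T :=
            mul_nonneg (mul_nonneg (by linarith only [hA'κ, hκ0]) (mul_nonneg htpos.le (by linarith only [htT]))) hTpos.le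
          have hsum : 0 ≤ T * ((1 - t^2) * A' + 2*t * B' - κ * (1 + t^2)) := by
            rw [key]; linarith only [h1, h2, h3]
          have hdiv := (mul_nonneg_iff_of_pos_left hTpos).mp hsum
          linarith only [hdiv]
        have hpc : p - c = (1 + t^2)⁻¹ • ((1 - t^2) • a + (2*t) • b) - d := by
          rw [hp, hd]; abel
        have hq2 : ‖(1 - t^2) • a + (2*t) • b‖ ^ 2 = (1 + t^2) ^ 2 := by
          rw [norm_add_sq_real, real_inner_smul_left, real_inner_smul_right, hab,
            norm_smul, norm_smul]
          have hna : ‖a‖ = 1 := by nlinarith only [han, norm_nonneg a]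
          have hnb : ‖b‖ = 1 := by nlinarith only [hbn, norm_nonneg b]
          rw [hna, hnb]
          simp [mul_pow, sq_abs]
          ring
        have hqd : ⟪(1 - t^2) • a + (2*t) • b, d⟫ = (1 - t^2) * A' + 2*t * B' := by
          rw [inner_add_left, real_inner_smul_left, real_inner_smul_left, ← hA', ← hB']
        have hnpc : ‖p - c‖ ^ 2 =
            (1 + t^2)⁻¹ ^ 2 * (1 + t^2) ^ 2
            - 2 * ((1 + t^2)⁻¹ * ((1 - t^2) * A' + 2*t * B')) + ‖d‖ ^ 2 := by
          rw [hpc, norm_sub_sq_real, real_inner_smul_left, hqd, norm_smul, mul_pow, hq2,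
            Real.norm_eq_abs, sq_abs]
        have hone : (1 + t^2)⁻¹ ^ 2 * (1 + t^2) ^ 2 = 1 := by field_simp
        have hfin : ‖p - c‖ ^ 2 ≤ 1 := by
          rw [hnpc, hone]
          have h2 : κ ≤ (1 + t^2)⁻¹ * ((1 - t^2) * A' + 2*t * B') := by
            have := mul_le_mul_of_nonneg_left hG (inv_pos.mpr h1t).le
            have hc : (1 + t^2)⁻¹ * (κ * (1 + t^2)) = κ := by field_simp
            linarith only [hc ▸ this]
          have hd2 : ‖d‖ ^ 2 = 2 * κ := by rw [hκdef]; ring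
          linarith only [h2, hd2]
        rw [dist_eq_norm]
        nlinarith only [hfin, norm_nonneg (p - c)]
      have := hmin p claim2
      linarith

    · -- degenerate case s = 2 : every c ∈ C equals the midpoint m
      set m := x₀ + (1/2 : ℝ) • w with hm
      have hcm : ∀ c ∈ C, c = m := by
        intro c hc
        have h1 : ‖c - x₀‖ ≤ 1 := by
          rw [← dist_eq_norm, dist_comm]; exact hx₀ c hc
        have h2 : ‖c - x‖ ≤ 1 := by
          rw [← dist_eq_norm, dist_comm]; exact hx c hc
        have e1 : c - x₀ = (c - m) + (1/2 : ℝ) • w := by rw [hm]; abel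
        have e2 : c - x = (c - m) - (1/2 : ℝ) • w := by
          have hxw : x = x₀ + w := by rw [hw]; abel
          rw [hm, hxw]; module
        have hwn : ‖(1/2 : ℝ) • w‖ ^ 2 = 1 := by
          rw [norm_smul]
          have : ‖w‖ = 2 := by rw [← hs, ← hseq]
          rw [this]; norm_num
        have q1 : ‖c - x₀‖ ^ 2 = ‖c - m‖ ^ 2 + 2 * ⟪c - m, (1/2:ℝ) • w⟫ + 1 := by
          rw [e1, norm_add_sq_real, hwn]
        have q2 : ‖c - x‖ ^ 2 = ‖c - m‖ ^ 2 - 2 * ⟪c - m, (1/2:ℝ) • w⟫ + 1 := by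
          rw [e2, norm_sub_sq_real, hwn]
        have hcm2 : ‖c - m‖ ^ 2 ≤ 0 := by nlinarith only [q1, q2, h1, h2, norm_nonneg (c - x₀), norm_nonneg (c - x)]
        have : ‖c - m‖ = 0 := le_antisymm (by nlinarith only [hcm2, norm_nonneg (c - m)]) (norm_nonneg _)
        have := norm_eq_zero.mp this
        have : c = m := by
          have h := sub_eq_zero.mp this; exact h
        exact this
      have hp : ∀ c ∈ C, dist (m - u) c ≤ 1 := by
        intro c hc
        rw [hcm c hc, dist_eq_norm]
        have : m - u - m = -u := by abel
        rw [this, norm_neg, hu]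
      have hmin' := hmin (m - u) hp
      have hexp : ⟪m - u, u⟫ = ⟪x₀, u⟫ + (1/2) * ⟪w, u⟫ - 1 := by
        rw [hm, inner_sub_left, inner_add_left, real_inner_smul_left,
          real_inner_self_eq_norm_sq, hu]
        ring
      rw [hexp] at hmin'
      have hs4 : s ^ 2 = 4 := by rw [hseq]; norm_num
      linarith only [hmin', hcon, hs4]
  have hd : dist (x₀ + u) x = ‖u - w‖ := by
    rw [dist_eq_norm]; congr 1; rw [hw]; abel
  have hsq : ‖u - w‖ ^ 2 ≤ 1 := by
    rw [norm_sub_sq_real]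
    have : ⟪u, w⟫ = ⟪w, u⟫ := real_inner_comm _ _
    nlinarith only [hu, main, this]
  rw [hd]
  nlinarith only [hsq, norm_nonneg (u - w)]

section Assembly

variable {n : ℕ}

lemma mem_cDual {K : Set (EuclideanSpace ℝ (Fin n))} {y : EuclideanSpace ℝ (Fin n)} :
    y ∈ cDual K ↔ ∀ x ∈ K, dist y x ≤ 1 := by
  simp [cDual]

lemma cDual_nonempty {K : Set (EuclideanSpace ℝ (Fin n))} (hK : IsBallBody K) :
    (cDual K).Nonempty := by
  obtain ⟨hne, C, ⟨c, hc⟩, hCeq⟩ := hK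
  refine ⟨c, mem_cDual.mpr fun x hx => ?_⟩
  rw [hCeq] at hx
  simp only [Set.mem_iInter, Metric.mem_closedBall] at hx
  rw [dist_comm]
  exact hx c hc

lemma isBallBody_cDual {K : Set (EuclideanSpace ℝ (Fin n))} (hK : IsBallBody K) :
    IsBallBody (cDual K) :=
  ⟨cDual_nonempty hK, K, hK.1, rfl⟩

lemma cDual_cDual {K : Set (EuclideanSpace ℝ (Fin n))} (hK : IsBallBody K) :
    cDual (cDual K) = K := by
  obtain ⟨hne, C, hCne, hCeq⟩ := hK
  apply Set.Subset.antisymm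
  · intro z hz
    rw [hCeq]
    simp only [Set.mem_iInter, Metric.mem_closedBall]
    intro c hc
    have hcK : c ∈ cDual K := by
      refine mem_cDual.mpr fun x hx => ?_
      rw [hCeq] at hx
      simp only [Set.mem_iInter, Metric.mem_closedBall] at hx
      rw [dist_comm]; exact hx c hc
    exact mem_cDual.mp hz c hcK
  · intro x hx
    refine mem_cDual.mpr fun y hy => ?_
    rw [dist_comm]
    exact mem_cDual.mp hy x hx

lemma ballBody_isCompact {K : Set (EuclideanSpace ℝ (Fin n))} (hK : IsBallBody K) :
    IsCompact K := by
  obtain ⟨hne, C, ⟨c, hc⟩, hCeq⟩ := hK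
  have hclosed : IsClosed K := by
    rw [hCeq]
    exact isClosed_biInter fun x _ => Metric.isClosed_closedBall
  have hsub : K ⊆ Metric.closedBall c 1 := by
    rw [hCeq]
    exact Set.biInter_subset_of_mem hc
  exact (isCompact_closedBall c 1).of_isClosed_subset hclosed hsub

lemma ballBody_isBounded {K : Set (EuclideanSpace ℝ (Fin n))} (hK : IsBallBody K) :
    Bornology.IsBounded K := (ballBody_isCompact hK).isBounded

lemma cDual_convex {K : Set (EuclideanSpace ℝ (Fin n))} :
    Convex ℝ (cDual K) :=
  convex_iInter fun x => convex_iInter fun _ => convex_closedBall x 1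

set_option maxHeartbeats 4000000 in
/-- Main distance estimate: points of `K^c` are close to `L^c`. -/
lemma infDist_cDual_le {K L : Set (EuclideanSpace ℝ (Fin n))}
    (hK : IsBallBody K) (hL : IsBallBody L) {y : EuclideanSpace ℝ (Fin n)}
    (hy : y ∈ cDual K) :
    Metric.infDist y (cDual L) ≤ Metric.hausdorffDist L K := by
  have hKc := ballBody_isCompact hK
  have hLc := ballBody_isCompact hL
  have hLdual : IsBallBody (cDual L) := isBallBody_cDual hL
  have hLdc := ballBody_isCompact hLdual
  have hLdne := hLdual.1
  by_cases hmem : y ∈ cDual L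
  · rw [Metric.infDist_zero_of_mem hmem]
    exact Metric.hausdorffDist_nonneg
  obtain ⟨p, hpD, hdist⟩ := hLdc.exists_infDist_eq_dist hLdne y
  have hD0 : 0 < dist y p := dist_pos.mpr (fun h => hmem (h ▸ hpD))
  set D := dist y p with hDdef
  set u := D⁻¹ • (y - p) with hudef
  have hu : ‖u‖ = 1 := by
    rw [hudef, norm_smul, Real.norm_eq_abs, abs_of_pos (inv_pos.mpr hD0), ← dist_eq_norm]
    field_simp
    exact hDdef.symm
  have hyp : y - p = D • u := by
    rw [hudef, smul_smul]
    field_simp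
    rw [one_smul]
  have huu : ⟪u, u⟫ = 1 := by rw [real_inner_self_eq_norm_sq, hu]; norm_num
  clear_value u
  -- projection inequality
  have hD2 : ‖y - p‖ = D := by rw [hDdef, dist_eq_norm]
  clear_value D
  have hproj : ∀ z ∈ cDual L, ⟪z - p, y - p⟫ ≤ 0 := by
    intro z hz
    by_contra hpos
    push_neg at hpos
    have hN0 : (0:ℝ) ≤ ‖z - p‖ ^ 2 := by positivity
    obtain ⟨θ, hθpos, hθ1, hθsmall⟩ :
        ∃ θ : ℝ, 0 < θ ∧ θ ≤ 1 ∧ θ * (‖z - p‖ ^ 2 + 1) ≤ ⟪z - p, y - p⟫ := by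
      refine ⟨min 1 (⟪z - p, y - p⟫ / (‖z - p‖ ^ 2 + 1)),
        lt_min one_pos (div_pos hpos (by positivity)), min_le_left _ _, ?_⟩
      have h1 : min 1 (⟪z - p, y - p⟫ / (‖z - p‖ ^ 2 + 1))
          ≤ ⟪z - p, y - p⟫ / (‖z - p‖ ^ 2 + 1) := min_le_right _ _
      calc min 1 (⟪z - p, y - p⟫ / (‖z - p‖ ^ 2 + 1)) * (‖z - p‖ ^ 2 + 1)
          ≤ ⟪z - p, y - p⟫ / (‖z - p‖ ^ 2 + 1) * (‖z - p‖ ^ 2 + 1) :=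
            mul_le_mul_of_nonneg_right h1 (by positivity)
        _ = ⟪z - p, y - p⟫ := by field_simp
    have hmemθ : p + θ • (z - p) ∈ cDual L := by
      have he : p + θ • (z - p) = (1 - θ) • p + θ • z := by module
      rw [he]
      exact cDual_convex hpD hz (by linarith) hθpos.le (by ring)
    have hge : D ≤ dist y (p + θ • (z - p)) := by
      rw [← hdist]
      exact Metric.infDist_le_dist_of_mem hmemθ
    have hexp : dist y (p + θ • (z - p)) ^ 2
        = D ^ 2 - 2 * (θ * ⟪z - p, y - p⟫) + θ ^ 2 * ‖z - p‖ ^ 2 := by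
      rw [dist_eq_norm, show y - (p + θ • (z - p)) = (y - p) - θ • (z - p) by module,
        norm_sub_sq_real, real_inner_smul_right, norm_smul, Real.norm_eq_abs, mul_pow,
        sq_abs, real_inner_comm (y - p) (z - p), hD2]
    have hDpos2 : (0:ℝ) ≤ dist y (p + θ • (z - p)) := dist_nonneg
    nlinarith only [mul_le_mul_of_nonneg_left hθsmall hθpos.le, mul_pos hθpos hpos,
      sq_nonneg θ, hD0, hge, hexp, hDpos2, hN0, hθpos, hθ1, hpos]
  -- minimizer of ⟪·, u⟫ on L
  obtain ⟨hLne, CL, hCLne, hLeq⟩ := hL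
  obtain ⟨x₁, hx₁L, hx₁min'⟩ := hLc.exists_isMinOn hLne
    ((continuous_id.inner continuous_const).continuousOn : ContinuousOn (fun z => ⟪z, u⟫) L)
  have hx₁min : ∀ q ∈ L, ⟪x₁, u⟫ ≤ ⟪q, u⟫ := fun q hq => isMinOn_iff.mp hx₁min' q hq
  have hmemL : ∀ z : EuclideanSpace ℝ (Fin n), z ∈ L ↔ ∀ c ∈ CL, dist z c ≤ 1 := by
    intro z
    rw [hLeq]
    simp
  have hx₁b : ∀ c ∈ CL, dist x₁ c ≤ 1 := (hmemL x₁).mp hx₁L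
  have hminb : ∀ q : EuclideanSpace ℝ (Fin n), (∀ c ∈ CL, dist q c ≤ 1) → ⟪x₁, u⟫ ≤ ⟪q, u⟫ :=
    fun q hq => hx₁min q ((hmemL q).mpr hq)
  have hlemB : ∀ z : EuclideanSpace ℝ (Fin n), (∀ c ∈ CL, dist z c ≤ 1) →
      dist (x₁ + u) z ≤ 1 := fun z hz => lemB hCLne hu hx₁b hminb hz
  have hzdual : x₁ + u ∈ cDual L := by
    rw [mem_cDual]
    intro z hz
    exact hlemB z ((hmemL z).mp hz)
  -- p dominates on direction u
  have hpu : ⟪x₁, u⟫ + 1 ≤ ⟪p, u⟫ := by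
    have h := hproj (x₁ + u) hzdual
    rw [hyp, real_inner_smul_right] at h
    have h2 : ⟪x₁ + u - p, u⟫ ≤ 0 := by
      rcases le_or_gt (⟪x₁ + u - p, u⟫) 0 with h' | h'
      · exact h'
      · nlinarith only [h, h', hD0]
    rw [show x₁ + u - p = (x₁ - p) + u by abel, inner_add_left, huu, inner_sub_left] at h2
    linarith
  have hDle : D ≤ ⟪y, u⟫ - ⟪x₁, u⟫ - 1 := by
    have h1 : ⟪y - p, u⟫ = D := by rw [hyp, real_inner_smul_left, huu, mul_one]
    rw [inner_sub_left] at h1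
    linarith
  -- epsilon argument
  have hEdist : EMetric.hausdorffEdist L K ≠ ⊤ :=
    Metric.hausdorffEdist_ne_top_of_nonempty_of_bounded hLne hK.1
      hLc.isBounded hKc.isBounded
  refine le_of_forall_pos_le_add fun ε hε => ?_
  have hx₁K : Metric.infDist x₁ K ≤ Metric.hausdorffDist L K :=
    Metric.infDist_le_hausdorffDist_of_mem hx₁L hEdist
  obtain ⟨x₂, hx₂K, hx₂d⟩ : ∃ x₂ ∈ K, dist x₁ x₂ < Metric.hausdorffDist L K + ε :=
    (Metric.infDist_lt_iff hK.1).mp (by linarith)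
  have h1 : dist y x₂ ≤ 1 := mem_cDual.mp hy x₂ hx₂K
  have h2 : ⟪y - x₂, u⟫ ≤ 1 := by
    calc ⟪y - x₂, u⟫ ≤ ‖y - x₂‖ * ‖u‖ := real_inner_le_norm _ _
      _ = dist y x₂ := by rw [hu, mul_one, dist_eq_norm]
      _ ≤ 1 := h1
  have h3 : ⟪x₂ - x₁, u⟫ ≤ dist x₁ x₂ := by
    calc ⟪x₂ - x₁, u⟫ ≤ ‖x₂ - x₁‖ * ‖u‖ := real_inner_le_norm _ _
      _ = dist x₂ x₁ := by rw [hu, mul_one, dist_eq_norm]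
      _ = dist x₁ x₂ := dist_comm _ _
  rw [hdist]
  rw [inner_sub_left] at h2 h3
  linarith

end Assembly

theorem stmt5 {n : ℕ} (K L : Set (EuclideanSpace ℝ (Fin n)))
    (hK : IsBallBody K) (hL : IsBallBody L) :
    Metric.hausdorffDist (cDual K) (cDual L) = Metric.hausdorffDist K L := by
  have main : ∀ K' L' : Set (EuclideanSpace ℝ (Fin n)), IsBallBody K' → IsBallBody L' →
      Metric.hausdorffDist (cDual K') (cDual L') ≤ Metric.hausdorffDist K' L' := by
    intro K' L' hK' hL'
    refine Metric.hausdorffDist_le_of_infDist Metric.hausdorffDist_nonneg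
      (fun y hy => ?_) (fun y hy => ?_)
    · calc Metric.infDist y (cDual L') ≤ Metric.hausdorffDist L' K' :=
        infDist_cDual_le hK' hL' hy
        _ = Metric.hausdorffDist K' L' := Metric.hausdorffDist_comm
    · exact infDist_cDual_le hL' hK' hy
  refine le_antisymm (main K L hK hL) ?_
  have h := main (cDual K) (cDual L) (isBallBody_cDual hK) (isBallBody_cDual hL)
  rwa [cDual_cDual hK, cDual_cDual hL] at h
end

section
/- For every K ∈ 𝒮ₙ and every unit vector u ∈ Sⁿ⁻¹, the support functions satisfy h_K(u) + h_{K^c}(−u) = 1. -/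
open RealInnerProductSpace

set_option maxHeartbeats 1000000

lemma key_arc {n : ℕ} {C K : Set (EuclideanSpace ℝ (Fin n))}
    (hKC : K = ⋂ c ∈ C, Metric.closedBall c 1)
    {u : EuclideanSpace ℝ (Fin n)} (hu : ‖u‖ = 1)
    {x₀ : EuclideanSpace ℝ (Fin n)} (hx₀ : x₀ ∈ K)
    (hmax : ∀ z ∈ K, ⟪z, u⟫ ≤ ⟪x₀, u⟫)
    {z : EuclideanSpace ℝ (Fin n)} (hz : z ∈ K) :
    ‖x₀ - u - z‖ ≤ 1 := by
  by_contra h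
  push_neg at h
  set v : EuclideanSpace ℝ (Fin n) := z - x₀ with hv
  set a : ℝ := ⟪v, u⟫ with ha
  set N : ℝ := ‖v‖ ^ 2 with hN
  have hN0 : 0 ≤ N := sq_nonneg _
  have hu2 : ⟪u, u⟫ = (1:ℝ) := by
    rw [real_inner_self_eq_norm_sq, hu]; norm_num
  have ha0 : a ≤ 0 := by
    have h1 := hmax z hz
    calc a = ⟪z, u⟫ - ⟪x₀, u⟫ := by rw [ha, hv, inner_sub_left]
    _ ≤ 0 := by linarith
  have hviol : 0 < N + 2 * a := by
    have h1 : x₀ - u - z = -(v + u) := by rw [hv]; abel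
    have h2 : ‖x₀ - u - z‖ ^ 2 = N + 2 * a + 1 := by
      rw [h1, norm_neg, norm_add_sq_real, hu, ← ha, ← hN]; ring
    nlinarith [norm_nonneg (x₀ - u - z)]
  have hNpos : 0 < N := by linarith
  set β : ℝ := (N - 2 * a) / 4 with hβ
  have hβ0 : 0 ≤ β := by rw [hβ]; linarith
  have hβa : -a < β := by rw [hβ]; linarith
  have hden : 0 < β ^ 2 + N := by positivity
  set t : ℝ := (N - 2 * β) / (β ^ 2 + N) with ht
  have hNβ : 0 < N - 2 * β := by rw [hβ]; linarith
  have ht0 : 0 < t := div_pos hNβ hden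
  have ht1 : t ≤ 1 := by
    rw [ht, div_le_one hden]; nlinarith
  have hteq : t * (β ^ 2 + N) = N - 2 * β := by
    rw [ht]; field_simp
  set δ : ℝ := t * β with hδ
  have hδ0 : 0 ≤ δ := mul_nonneg ht0.le hβ0
  set p : EuclideanSpace ℝ (Fin n) := x₀ + t • v + δ • u with hp
  -- p ∈ K
  have hpK : p ∈ K := by
    rw [hKC]
    rw [hKC] at hx₀ hz
    simp only [Set.mem_iInter, Metric.mem_closedBall] at hx₀ hz ⊢
    intro c hc
    have hx₀c : ‖x₀ - c‖ ≤ 1 := by rw [← dist_eq_norm]; exact hx₀ c hc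
    have hzc : ‖z - c‖ ≤ 1 := by rw [← dist_eq_norm]; exact hz c hc
    set w : EuclideanSpace ℝ (Fin n) := x₀ - c with hw
    -- constraint from z ∈ ball c
    have hwv : ‖w‖ ^ 2 + 2 * ⟪w, v⟫ + N ≤ 1 := by
      have h1 : z - c = w + v := by rw [hw, hv]; abel
      have h2 : ‖z - c‖ ^ 2 = ‖w‖ ^ 2 + 2 * ⟪w, v⟫ + N := by
        rw [h1, norm_add_sq_real, ← hN]
      nlinarith [sq_nonneg (‖z - c‖ - 1), norm_nonneg (z - c)]
    -- midpoint bound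
    have hM : ‖w + t • v‖ ^ 2 = ‖w‖ ^ 2 + 2 * t * ⟪w, v⟫ + t ^ 2 * N := by
      rw [norm_add_sq_real, norm_smul, real_inner_smul_right, hN]
      rw [mul_pow, Real.norm_eq_abs, sq_abs]; ring
    have hMle : ‖w + t • v‖ ^ 2 ≤ 1 - t * (1 - t) * N := by
      rw [hM]
      nlinarith [sq_nonneg ‖w‖, mul_nonneg ht0.le (sub_nonneg.2 hwv),
        mul_nonneg (sub_nonneg.2 ht1) (sub_nonneg.2 (by nlinarith [sq_nonneg (‖w‖ - 1), norm_nonneg w] : ‖w‖ ^ 2 ≤ 1))]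
    -- Cauchy-Schwarz bound on the cross term
    have hcs : ⟪w, u⟫ + t * a ≤ 1 := by
      have h1 : ⟪w + t • v, u⟫ = ⟪w, u⟫ + t * a := by
        rw [inner_add_left, real_inner_smul_left, ha]
      have h2 : ⟪w + t • v, u⟫ ≤ ‖w + t • v‖ * ‖u‖ := real_inner_le_norm _ _
      have h3 : ‖w + t • v‖ ≤ 1 := by
        nlinarith [norm_nonneg (w + t • v), mul_nonneg (mul_nonneg ht0.le (sub_nonneg.2 ht1)) hN0]
      rw [hu] at h2; rw [← h1]; linarith
    -- expand ‖p - c‖²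
    have hpc : ‖p - c‖ ^ 2 = ‖w + t • v‖ ^ 2 + 2 * δ * (⟪w, u⟫ + t * a) + δ ^ 2 := by
      have h1 : p - c = (w + t • v) + δ • u := by rw [hp, hw]; abel
      rw [h1, norm_add_sq_real, real_inner_smul_right, inner_add_left,
        real_inner_smul_left, norm_smul, hu, ← ha]
      simp [sq_abs, mul_pow]
      ring
    have hδeq : 2 * δ + δ ^ 2 = t * (1 - t) * N := by
      rw [hδ]; nlinarith [hteq]
    rw [dist_eq_norm]
    have hfin : ‖p - c‖ ^ 2 ≤ 1 := by
      rw [hpc]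
      nlinarith [mul_nonneg hδ0 (sub_nonneg.2 hcs)]
    nlinarith [norm_nonneg (p - c), dist_eq_norm p c]
  -- contradiction with maximality
  have hcontra := hmax p hpK
  have hpu : ⟪p, u⟫ = ⟪x₀, u⟫ + t * a + δ := by
    rw [hp, inner_add_left, inner_add_left, real_inner_smul_left,
      real_inner_smul_left, hu2, ← ha]; ring
  rw [hpu] at hcontra
  rw [hδ] at hcontra
  nlinarith [mul_pos ht0 (by linarith : (0:ℝ) < a + β)]

theorem stmt6 {n : ℕ} (K : Set (EuclideanSpace ℝ (Fin n))) (hK : IsBallBody K)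
    (u : EuclideanSpace ℝ (Fin n)) (hu : ‖u‖ = 1) :
    sSup ((fun x => ⟪x, u⟫) '' K) + sSup ((fun x => ⟪x, -u⟫) '' cDual K) = 1 := by
  obtain ⟨hKne, C, ⟨c₀, hc₀⟩, hKC⟩ := hK
  -- K is compact
  have hKsub : K ⊆ Metric.closedBall c₀ 1 := by
    rw [hKC]; exact Set.biInter_subset_of_mem hc₀
  have hKclosed : IsClosed K := by
    rw [hKC]; exact isClosed_biInter fun c _ => Metric.isClosed_closedBall
  have hKcpt : IsCompact K :=
    (isCompact_closedBall c₀ 1).of_isClosed_subset hKclosed hKsub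
  -- maximizer
  have hcont : Continuous fun x : EuclideanSpace ℝ (Fin n) => ⟪x, u⟫ :=
    continuous_id.inner continuous_const
  obtain ⟨x₀, hx₀K, hx₀max⟩ := hKcpt.exists_isMaxOn hKne hcont.continuousOn
  have hmax : ∀ z ∈ K, ⟪z, u⟫ ≤ ⟪x₀, u⟫ := fun z hz => hx₀max hz
  have hu2 : ⟪u, u⟫ = (1:ℝ) := by
    rw [real_inner_self_eq_norm_sq, hu]; norm_num
  -- first sSup
  have h1 : sSup ((fun x => ⟪x, u⟫) '' K) = ⟪x₀, u⟫ := by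
    apply IsGreatest.csSup_eq
    exact ⟨Set.mem_image_of_mem _ hx₀K, by rintro y ⟨z, hz, rfl⟩; exact hmax z hz⟩
  -- second sSup
  have hmem : x₀ - u ∈ cDual K := by
    simp only [cDual, Set.mem_iInter, Metric.mem_closedBall]
    intro z hz
    rw [dist_eq_norm]
    exact key_arc hKC hu hx₀K hmax hz
  have h2 : sSup ((fun x => ⟪x, -u⟫) '' cDual K) = 1 - ⟪x₀, u⟫ := by
    apply IsGreatest.csSup_eq
    constructor
    · refine ⟨x₀ - u, hmem, ?_⟩
      simp only [inner_neg_right, inner_sub_left, hu2]; ring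
    · rintro y ⟨w, hw, rfl⟩
      have hwx₀ : dist w x₀ ≤ 1 := by
        have := Set.mem_iInter₂.mp hw x₀ hx₀K
        simpa using this
      have hcs : ⟪x₀ - w, u⟫ ≤ 1 := by
        calc ⟪x₀ - w, u⟫ ≤ ‖x₀ - w‖ * ‖u‖ := real_inner_le_norm _ _
        _ ≤ 1 := by rw [hu, mul_one, ← dist_eq_norm, dist_comm]; exact hwx₀
      rw [inner_sub_left] at hcs
      simp only [inner_neg_right]
      linarith
  rw [h1, h2]; ring
end

section
/- If K ∈ 𝒮ₙ has circumradius 1, then K is a translate of the Euclidean unit ball. -/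
def IsCircumball {n : ℕ} (c : EuclideanSpace ℝ (Fin n)) (r : ℝ)
    (K : Set (EuclideanSpace ℝ (Fin n))) : Prop :=
  K ⊆ Metric.closedBall c r ∧ ∀ c' r', K ⊆ Metric.closedBall c' r' → r ≤ r'

lemma midpoint_dist_sq {n : ℕ} (z y x : EuclideanSpace ℝ (Fin n)) :
    dist z (midpoint ℝ y x) ^ 2 =
      (dist z y ^ 2 + dist z x ^ 2) / 2 - dist y x ^ 2 / 4 := by
  have hm : z - midpoint ℝ y x = (2 : ℝ)⁻¹ • ((z - y) + (z - x)) := by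
    rw [midpoint_eq_smul_add, invOf_eq_inv]
    module
  have hpar := parallelogram_law_with_norm ℝ (z - y) (z - x)
  have hsub : (z - y) - (z - x) = x - y := by abel
  rw [hsub] at hpar
  have h1 : dist z (midpoint ℝ y x) = (2 : ℝ)⁻¹ * ‖(z - y) + (z - x)‖ := by
    rw [dist_eq_norm, hm, norm_smul]
    simp
  rw [h1, dist_eq_norm, dist_eq_norm, dist_eq_norm, ← norm_sub_rev x y]
  nlinarith [hpar, norm_nonneg ((z-y)+(z-x))]

theorem stmt11 {n : ℕ} (K : Set (EuclideanSpace ℝ (Fin n))) (hK : IsBallBody K)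
    (c : EuclideanSpace ℝ (Fin n)) (hc : IsCircumball c 1 K) :
    ∃ y : EuclideanSpace ℝ (Fin n), K = Metric.closedBall y 1 := by
  obtain ⟨hKne, C, ⟨x₀, hx₀⟩, hKC⟩ := hK
  have hCsing : C = {x₀} := by
    rw [Set.eq_singleton_iff_unique_mem]
    refine ⟨hx₀, fun y hy => ?_⟩
    by_contra hne
    have hd : 0 < dist y x₀ := dist_pos.mpr hne
    set r' : ℝ := Real.sqrt (1 - dist y x₀ ^ 2 / 4) with hr'
    have hsub : K ⊆ Metric.closedBall (midpoint ℝ y x₀) r' := by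
      intro z hz
      have hz' := hKC ▸ hz
      have hzy : dist z y ≤ 1 := by
        have := Set.mem_iInter₂.mp hz' y hy
        simpa [Metric.mem_closedBall] using this
      have hzx : dist z x₀ ≤ 1 := by
        have := Set.mem_iInter₂.mp hz' x₀ hx₀
        simpa [Metric.mem_closedBall] using this
      have hsq : dist z (midpoint ℝ y x₀) ^ 2 ≤ 1 - dist y x₀ ^ 2 / 4 := by
        rw [midpoint_dist_sq]
        nlinarith [dist_nonneg (x := z) (y := y), dist_nonneg (x := z) (y := x₀)]
      have ht : 0 ≤ 1 - dist y x₀ ^ 2 / 4 := le_trans (sq_nonneg _) hsq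
      rw [Metric.mem_closedBall]
      exact (Real.le_sqrt dist_nonneg ht).mpr hsq
    have h1 : (1 : ℝ) ≤ r' := hc.2 _ _ hsub
    have ht : 0 ≤ 1 - dist y x₀ ^ 2 / 4 := by
      by_contra h
      push_neg at h
      rw [hr', Real.sqrt_eq_zero_of_nonpos (le_of_lt h)] at h1
      linarith
    have h3 : r' ^ 2 = 1 - dist y x₀ ^ 2 / 4 := Real.sq_sqrt ht
    nlinarith [h1, h3]
  refine ⟨x₀, ?_⟩
  rw [hKC, hCsing]
  simp
end

section
/- Let T : 𝒮ₙ → 𝒮ₙ be a (not necessarily surjective) isometry with respect to the Hausdorff distance. Then either there exists a point x₀ ∈ ℝⁿ such that T({x₀}) is a singleton, or there exists y₀ ∈ ℝⁿ such that T(y₀ + B₂ⁿ) is a singleton. -/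
open Metric Set Filter
open scoped RealInnerProductSpace Topology

noncomputable section

namespace BBProof

variable {n : ℕ}

local notation "E" => EuclideanSpace ℝ (Fin n)

lemma bb_subset_ball {K : Set E} (h : IsBallBody K) : ∃ c : E, K ⊆ closedBall c 1 := by
  obtain ⟨-, C, ⟨c, hc⟩, rfl⟩ := h
  exact ⟨c, fun p hp => by simpa using (Set.mem_iInter₂.1 hp c hc)⟩

lemma bb_isClosed {K : Set E} (h : IsBallBody K) : IsClosed K := by
  obtain ⟨-, C, -, rfl⟩ := h
  exact isClosed_biInter (fun c _ => isClosed_closedBall)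

lemma bb_convex {K : Set E} (h : IsBallBody K) : Convex ℝ K := by
  obtain ⟨-, C, -, rfl⟩ := h
  exact convex_iInter₂ (fun c _ => convex_closedBall c 1)

lemma bb_isCompact {K : Set E} (h : IsBallBody K) : IsCompact K := by
  obtain ⟨c, hc⟩ := bb_subset_ball h
  exact Metric.isCompact_of_isClosed_isBounded (bb_isClosed h)
    (Metric.isBounded_closedBall.subset hc)

lemma bb_diam {K : Set E} (h : IsBallBody K) {a b : E} (ha : a ∈ K) (hb : b ∈ K) :
    dist a b ≤ 2 := by
  obtain ⟨c, hc⟩ := bb_subset_ball h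
  have h1 := hc ha; have h2 := hc hb
  rw [mem_closedBall] at h1 h2
  calc dist a b ≤ dist a c + dist c b := dist_triangle a c b
    _ ≤ 1 + 1 := by rw [dist_comm c b]; exact add_le_add h1 h2
    _ = 2 := by norm_num

lemma bb_hd_ne_top {K L : Set E} (hK : IsBallBody K) (hL : IsBallBody L) :
    EMetric.hausdorffEdist K L ≠ ⊤ := by
  obtain ⟨c, hc⟩ := bb_subset_ball hK
  obtain ⟨d, hd⟩ := bb_subset_ball hL
  exact Metric.hausdorffEdist_ne_top_of_nonempty_of_bounded hK.1 hL.1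
    (Metric.isBounded_closedBall.subset hc) (Metric.isBounded_closedBall.subset hd)

/-- support function -/
def sfn (A : Set (EuclideanSpace ℝ (Fin n))) (v : EuclideanSpace ℝ (Fin n)) : ℝ :=
  sSup ((fun a => ⟪a, v⟫) '' A)

lemma bb_bddAbove {A : Set E} (hA : IsBallBody A) (v : E) :
    BddAbove ((fun a => ⟪a, v⟫) '' A) := by
  obtain ⟨c, hc⟩ := bb_subset_ball hA
  refine ⟨(‖c‖ + 1) * ‖v‖, ?_⟩
  rintro x ⟨a, ha, rfl⟩
  have hna : ‖a‖ ≤ ‖c‖ + 1 := by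
    have := hc ha; rw [mem_closedBall, dist_eq_norm] at this
    calc ‖a‖ = ‖a - c + c‖ := by rw [sub_add_cancel]
      _ ≤ ‖a - c‖ + ‖c‖ := norm_add_le _ _
      _ ≤ ‖c‖ + 1 := by linarith
  calc ⟪a, v⟫ ≤ ‖a‖ * ‖v‖ := real_inner_le_norm a v
    _ ≤ (‖c‖ + 1) * ‖v‖ := by
        have : (0:ℝ) ≤ ‖v‖ := norm_nonneg v
        nlinarith [norm_nonneg a]

lemma le_sfn {A : Set E} (hA : IsBallBody A) {a : E} (ha : a ∈ A) (v : E) :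
    ⟪a, v⟫ ≤ sfn A v :=
  le_csSup (bb_bddAbove hA v) (Set.mem_image_of_mem _ ha)

lemma sfn_le {A : Set E} (hA : IsBallBody A) {v : E} {r : ℝ}
    (h : ∀ a ∈ A, ⟪a, v⟫ ≤ r) : sfn A v ≤ r :=
  csSup_le (hA.1.image _) (by rintro x ⟨a, ha, rfl⟩; exact h a ha)

lemma sfn_attained {A : Set E} (hA : IsBallBody A) (v : E) :
    ∃ a ∈ A, sfn A v = ⟪a, v⟫ := by
  obtain ⟨a, ha, hmax⟩ := (bb_isCompact hA).exists_isMaxOn hA.1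
    (Continuous.continuousOn (continuous_id.inner continuous_const : Continuous fun a : E => ⟪a, v⟫))
  exact ⟨a, ha, le_antisymm (sfn_le hA hmax) (le_sfn hA ha v)⟩



-- pointwise: support functions differ by at most hausdorffDist
lemma sfn_sub_le_hd {A B : Set E} (hA : IsBallBody A) (hB : IsBallBody B) {v : E}
    (hv : ‖v‖ = 1) : sfn A v - sfn B v ≤ Metric.hausdorffDist A B := by
  obtain ⟨a, ha, hav⟩ := sfn_attained hA v
  have h1 : Metric.infDist a B ≤ Metric.hausdorffDist A B :=
    Metric.infDist_le_hausdorffDist_of_mem ha (bb_hd_ne_top hA hB)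
  obtain ⟨b, hb, hdb⟩ := (bb_isCompact hB).exists_infDist_eq_dist hB.1 a
  have h2 : ⟪a, v⟫ - ⟪b, v⟫ ≤ dist a b := by
    have := real_inner_le_norm (a - b) v
    rw [inner_sub_left] at this
    rw [dist_eq_norm]
    calc ⟪a, v⟫ - ⟪b, v⟫ ≤ ‖a - b‖ * ‖v‖ := this
      _ = ‖a - b‖ := by rw [hv, mul_one]
  have h3 : ⟪b, v⟫ ≤ sfn B v := le_sfn hB hb v
  rw [hav]
  rw [hdb] at h1
  linarith

-- projection-based: if support functions are within r, hausdorff distance is ≤ r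
lemma infDist_le_of_sfn {A B : Set E} (hA : IsBallBody A) (hB : IsBallBody B) {r : ℝ}
    (hr : 0 ≤ r)
    (h : ∀ v : E, ‖v‖ = 1 → sfn A v - sfn B v ≤ r) {a : E} (ha : a ∈ A) :
    Metric.infDist a B ≤ r := by
  obtain ⟨b, hb, hproj⟩ := exists_norm_eq_iInf_of_complete_convex hB.1
    ((bb_isClosed hB).isComplete) (bb_convex hB) a
  have hobs : ∀ w ∈ B, ⟪a - b, w - b⟫ ≤ 0 :=
    (norm_eq_iInf_iff_real_inner_le_zero (bb_convex hB) hb).1 hproj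
  rcases eq_or_ne a b with rfl | hab
  · calc Metric.infDist a B ≤ dist a a := Metric.infDist_le_dist_of_mem hb
      _ = 0 := dist_self a
      _ ≤ r := hr
  · set d := ‖a - b‖ with hd
    have hd0 : 0 < d := by
      rw [hd, norm_pos_iff]; exact sub_ne_zero_of_ne hab
    set v := d⁻¹ • (a - b) with hv
    have hvn : ‖v‖ = 1 := by
      rw [hv, norm_smul, norm_inv, Real.norm_eq_abs, abs_of_pos hd0, ← hd, inv_mul_cancel₀ hd0.ne']
    have hBv : sfn B v ≤ ⟪b, v⟫ := by
      refine sfn_le hB (fun w hw => ?_)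
      have h1 : ⟪w - b, v⟫ ≤ 0 := by
        rw [hv, real_inner_smul_right]
        have := hobs w hw
        rw [real_inner_comm] at this
        have hdinv : (0:ℝ) ≤ d⁻¹ := le_of_lt (inv_pos.2 hd0)
        exact mul_nonpos_of_nonneg_of_nonpos hdinv this
      have h2 : ⟪w, v⟫ - ⟪b, v⟫ = ⟪w - b, v⟫ := (inner_sub_left w b v).symm
      linarith
    have hAv : ⟪b, v⟫ + d ≤ sfn A v := by
      have : ⟪a, v⟫ = ⟪b, v⟫ + d := by
        have h1 : ⟪a - b, v⟫ = d := by
          rw [hv, real_inner_smul_right, real_inner_self_eq_norm_sq]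
          rw [← hd]
          field_simp
        have h2 : ⟪a, v⟫ - ⟪b, v⟫ = ⟪a - b, v⟫ := (inner_sub_left a b v).symm
        linarith
      rw [← this]; exact le_sfn hA ha v
    have : d ≤ r := by
      have := h v hvn; linarith
    calc Metric.infDist a B ≤ dist a b := Metric.infDist_le_dist_of_mem hb
      _ = d := by rw [dist_eq_norm, hd]
      _ ≤ r := this



lemma exists_unit (hn : 1 ≤ n) : ∃ u : E, ‖u‖ = 1 := by
  refine ⟨EuclideanSpace.single (⟨0, hn⟩ : Fin n) (1:ℝ), ?_⟩
  rw [EuclideanSpace.norm_single]; norm_num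

lemma sfn_lip {X : Set E} (hX : IsBallBody X) : ∃ C : ℝ, 0 ≤ C ∧ ∀ v w : E,
    sfn X v - sfn X w ≤ C * ‖v - w‖ := by
  obtain ⟨c, hc⟩ := bb_subset_ball hX
  refine ⟨‖c‖ + 1, by positivity, fun v w => ?_⟩
  obtain ⟨a, ha, hav⟩ := sfn_attained hX v
  have h1 : ⟪a, w⟫ ≤ sfn X w := le_sfn hX ha w
  have h2 : ⟪a, v⟫ - ⟪a, w⟫ ≤ (‖c‖ + 1) * ‖v - w‖ := by
    have h3 : ⟪a, v - w⟫ ≤ ‖a‖ * ‖v - w‖ := real_inner_le_norm a (v - w)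
    have h4 : ‖a‖ ≤ ‖c‖ + 1 := by
      have := hc ha; rw [mem_closedBall, dist_eq_norm] at this
      calc ‖a‖ = ‖a - c + c‖ := by rw [sub_add_cancel]
        _ ≤ ‖a - c‖ + ‖c‖ := norm_add_le _ _
        _ ≤ ‖c‖ + 1 := by linarith
    have h5 : ⟪a, v⟫ - ⟪a, w⟫ = ⟪a, v - w⟫ := (inner_sub_right a v w).symm
    nlinarith [norm_nonneg (v - w), norm_nonneg a]
  linarith [hav ▸ h2]

lemma sfn_cont {X : Set E} (hX : IsBallBody X) : Continuous (sfn X) := by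
  obtain ⟨C, hC0, hC⟩ := sfn_lip hX
  rw [Metric.continuous_iff]
  intro v ε hε
  refine ⟨ε / (C + 1), by positivity, fun w hw => ?_⟩
  have l1 := hC w v
  have l2 := hC v w
  rw [Real.dist_eq]
  rw [dist_eq_norm] at hw
  have hvw : ‖v - w‖ = ‖w - v‖ := norm_sub_rev v w
  have habs : |sfn X w - sfn X v| ≤ C * ‖w - v‖ := by
    rw [abs_le]; constructor
    · rw [hvw] at l2; linarith
    · linarith
  calc |sfn X w - sfn X v| ≤ C * ‖w - v‖ := habs
    _ ≤ (C + 1) * ‖w - v‖ := by nlinarith [norm_nonneg (w - v)]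
    _ < (C + 1) * (ε / (C + 1)) := by
        apply mul_lt_mul_of_pos_left hw; positivity
    _ = ε := by field_simp

/-- the Hausdorff distance is attained as a support function difference -/
lemma hd_attained (hn : 1 ≤ n) {A B : Set E} (hA : IsBallBody A) (hB : IsBallBody B) :
    ∃ v : E, ‖v‖ = 1 ∧ |sfn A v - sfn B v| = Metric.hausdorffDist A B := by
  have hcont : Continuous (fun v : E => |sfn A v - sfn B v|) :=
    ((sfn_cont hA).sub (sfn_cont hB)).abs
  -- the sphere is compact and nonempty
  obtain ⟨u0, hu0⟩ := exists_unit (n:=n) hn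
  have hsph : (Metric.sphere (0:E) 1).Nonempty := ⟨u0, by simpa using hu0⟩
  obtain ⟨v, hv, hmax⟩ := (isCompact_sphere (0:E) 1).exists_isMaxOn hsph hcont.continuousOn
  have hv1 : ‖v‖ = 1 := by simpa using hv
  set r := |sfn A v - sfn B v| with hr
  have hr0 : 0 ≤ r := abs_nonneg _
  have hub : ∀ w : E, ‖w‖ = 1 → |sfn A w - sfn B w| ≤ r := by
    intro w hw
    exact hmax (by simpa using hw)
  -- hausdorffDist ≤ r
  have h1 : Metric.hausdorffDist A B ≤ r := by
    apply Metric.hausdorffDist_le_of_infDist hr0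
    · intro a ha
      exact infDist_le_of_sfn hA hB hr0
        (fun w hw => le_trans (le_abs_self _) (hub w hw)) ha
    · intro b hb
      refine infDist_le_of_sfn hB hA hr0 (fun w hw => ?_) hb
      have := hub w hw
      rw [abs_sub_comm] at this
      exact le_trans (le_abs_self _) this
  -- r ≤ hausdorffDist
  have h2 : r ≤ Metric.hausdorffDist A B := by
    rw [hr, abs_sub_le_iff]
    constructor
    · exact sfn_sub_le_hd hA hB hv1
    · rw [Metric.hausdorffDist_comm]; exact sfn_sub_le_hd hB hA hv1
  exact ⟨v, hv1, le_antisymm h2 h1⟩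

lemma sfn_sub_abs_le_hd {A B : Set E} (hA : IsBallBody A) (hB : IsBallBody B) {v : E}
    (hv : ‖v‖ = 1) : |sfn A v - sfn B v| ≤ Metric.hausdorffDist A B := by
  rw [abs_sub_le_iff]
  exact ⟨sfn_sub_le_hd hA hB hv, by
    rw [Metric.hausdorffDist_comm]; exact sfn_sub_le_hd hB hA hv⟩



lemma bb_width_le {A : Set E} (hA : IsBallBody A) {v : E} (hv : ‖v‖ = 1) :
    sfn A v + sfn A (-v) ≤ 2 := by
  obtain ⟨c, hc⟩ := bb_subset_ball hA
  have key : ∀ w : E, ‖w‖ = 1 → sfn A w ≤ ⟪c, w⟫ + 1 := by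
    intro w hw
    refine sfn_le hA (fun a ha => ?_)
    have h1 : ⟪a - c, w⟫ ≤ ‖a - c‖ * ‖w‖ := real_inner_le_norm _ _
    have h2 : ‖a - c‖ ≤ 1 := by have := hc ha; rwa [mem_closedBall, dist_eq_norm] at this
    have h3 : ⟪a, w⟫ - ⟪c, w⟫ = ⟪a - c, w⟫ := (inner_sub_left a c w).symm
    rw [hw, mul_one] at h1
    linarith
  have k1 := key v hv
  have k2 := key (-v) (by rwa [norm_neg])
  have : ⟪c, -v⟫ = -⟪c, v⟫ := by rw [inner_neg_right]
  linarith

lemma bb_width_nonneg {A : Set E} (hA : IsBallBody A) (v : E) :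
    0 ≤ sfn A v + sfn A (-v) := by
  obtain ⟨a, ha⟩ := hA.1
  have h1 := le_sfn hA ha v
  have h2 := le_sfn hA ha (-v)
  have : ⟪a, -v⟫ = -⟪a, v⟫ := by rw [inner_neg_right]
  linarith

lemma bb_singleton_of_width {A : Set E} (hA : IsBallBody A)
    (h : ∀ v : E, ‖v‖ = 1 → sfn A v + sfn A (-v) ≤ 0) : ∃ p, A = {p} := by
  obtain ⟨a, ha⟩ := hA.1
  refine ⟨a, Set.eq_singleton_iff_unique_mem.2 ⟨ha, fun b hb => ?_⟩⟩
  by_contra hab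
  have hd0 : 0 < ‖b - a‖ := by rw [norm_pos_iff]; exact sub_ne_zero_of_ne hab
  set v := ‖b - a‖⁻¹ • (b - a) with hv
  have hvn : ‖v‖ = 1 := by
    rw [hv, norm_smul, norm_inv, Real.norm_eq_abs, abs_of_pos hd0, inv_mul_cancel₀ hd0.ne']
  have h1 : ⟪b, v⟫ ≤ sfn A v := le_sfn hA hb v
  have h2 : ⟪a, -v⟫ ≤ sfn A (-v) := le_sfn hA ha (-v)
  have h3 : ⟪b - a, v⟫ = ‖b - a‖ := by
    rw [hv, real_inner_smul_right, real_inner_self_eq_norm_sq]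
    field_simp
  have h4 : ⟪b, v⟫ - ⟪a, v⟫ = ⟪b - a, v⟫ := (inner_sub_left b a v).symm
  have h5 : ⟪a, -v⟫ = -⟪a, v⟫ := by rw [inner_neg_right]
  have h6 := h v hvn
  linarith

lemma bb_near_point {A : Set E} (hA : IsBallBody A) {q : E} (hq : q ∈ A) {w : E}
    (hw : ‖w‖ = 1) : sfn A w - 2 ≤ ⟪q, w⟫ ∧ ⟪q, w⟫ ≤ sfn A w := by
  refine ⟨?_, le_sfn hA hq w⟩
  obtain ⟨a, ha, hav⟩ := sfn_attained hA w
  have h1 : ⟪a - q, w⟫ ≤ ‖a - q‖ * ‖w‖ := real_inner_le_norm _ _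
  have h2 : ‖a - q‖ ≤ 2 := by
    have := bb_diam hA ha hq; rwa [dist_eq_norm] at this
  have h3 : ⟪a, w⟫ - ⟪q, w⟫ = ⟪a - q, w⟫ := (inner_sub_left a q w).symm
  rw [hw, mul_one] at h1
  rw [hav]
  linarith

-- source-side facts
lemma ibb_singleton (hn : 1 ≤ n) (x : E) : IsBallBody ({x} : Set E) := by
  refine ⟨⟨x, rfl⟩, Metric.sphere x 1, ?_, ?_⟩
  · obtain ⟨u, hu⟩ := exists_unit (n:=n) hn
    exact ⟨x + u, by simp [mem_sphere, dist_eq_norm, hu]⟩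
  · apply Set.eq_of_subset_of_subset
    · rintro p rfl
      refine Set.mem_iInter₂.2 (fun c hc => ?_)
      rw [mem_sphere] at hc
      rw [mem_closedBall, dist_comm, hc]
    · intro p hp
      rw [Set.mem_iInter₂] at hp
      by_contra hpx
      rw [Set.mem_singleton_iff] at hpx
      have hd0 : 0 < ‖p - x‖ := by rw [norm_pos_iff]; exact sub_ne_zero_of_ne hpx
      set c := x - ‖p - x‖⁻¹ • (p - x) with hc
      have hcs : c ∈ Metric.sphere x 1 := by
        rw [mem_sphere, dist_eq_norm, hc]
        simp only [sub_sub_cancel_left]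
        rw [norm_neg, norm_smul, norm_inv, Real.norm_eq_abs, abs_of_pos hd0,
          inv_mul_cancel₀ hd0.ne']
      have := hp c hcs
      rw [mem_closedBall, dist_eq_norm, hc] at this
      have heq : p - (x - ‖p - x‖⁻¹ • (p - x)) = (1 + ‖p - x‖⁻¹) • (p - x) := by
        rw [add_smul, one_smul]; abel
      rw [heq, norm_smul, Real.norm_eq_abs] at this
      have hpos : (0:ℝ) < 1 + ‖p - x‖⁻¹ := by positivity
      rw [abs_of_pos hpos] at this
      have hinv : ‖p - x‖⁻¹ * ‖p - x‖ = 1 := inv_mul_cancel₀ hd0.ne'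
      nlinarith

lemma ibb_ball (y : E) : IsBallBody (Metric.closedBall y 1) := by
  refine ⟨⟨y, by simp⟩, {y}, ⟨y, rfl⟩, by simp⟩

lemma hd_ne_top_pair {A B : Set E} (hA : A.Nonempty) (hB : B.Nonempty)
    (bA : Bornology.IsBounded A) (bB : Bornology.IsBounded B) :
    EMetric.hausdorffEdist A B ≠ ⊤ :=
  Metric.hausdorffEdist_ne_top_of_nonempty_of_bounded hA hB bA bB

lemma hd_singleton_singleton (x y : E) :
    Metric.hausdorffDist ({x} : Set E) {y} = dist x y := by
  apply le_antisymm
  · apply Metric.hausdorffDist_le_of_mem_dist dist_nonneg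
    · rintro p rfl; exact ⟨y, rfl, le_refl _⟩
    · rintro p rfl; exact ⟨x, rfl, by rw [dist_comm]⟩
  · have h1 : Metric.infDist x ({y} : Set E) ≤ Metric.hausdorffDist {x} {y} :=
      Metric.infDist_le_hausdorffDist_of_mem rfl
        (hd_ne_top_pair ⟨x, rfl⟩ ⟨y, rfl⟩ Bornology.isBounded_singleton
          Bornology.isBounded_singleton)
    rwa [Metric.infDist_singleton] at h1

lemma hd_ball_ball (x y : E) :
    Metric.hausdorffDist (Metric.closedBall x 1) (Metric.closedBall y 1) = dist x y := by
  rcases eq_or_ne x y with rfl | hxy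
  · simp [Metric.hausdorffDist_self_zero]
  apply le_antisymm
  · apply Metric.hausdorffDist_le_of_mem_dist dist_nonneg
    · intro p hp
      refine ⟨p + (y - x), ?_, ?_⟩
      · rw [mem_closedBall] at hp ⊢
        calc dist (p + (y - x)) y = dist p x := by
              rw [dist_eq_norm, dist_eq_norm]; congr 1; abel
          _ ≤ 1 := hp
      · rw [dist_eq_norm]
        have : p - (p + (y - x)) = x - y := by abel
        rw [this, ← dist_eq_norm]
    · intro p hp
      refine ⟨p + (x - y), ?_, ?_⟩
      · rw [mem_closedBall] at hp ⊢
        calc dist (p + (x - y)) x = dist p y := by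
              rw [dist_eq_norm, dist_eq_norm]; congr 1; abel
          _ ≤ 1 := hp
      · rw [dist_eq_norm]
        have : p - (p + (x - y)) = y - x := by abel
        rw [this, ← dist_eq_norm, dist_comm]
  · have hd0 : 0 < ‖x - y‖ := by rw [norm_pos_iff]; exact sub_ne_zero_of_ne hxy
    set p := x + ‖x - y‖⁻¹ • (x - y) with hp
    have hpmem : p ∈ Metric.closedBall x 1 := by
      rw [mem_closedBall, dist_eq_norm, hp]
      have : x + ‖x - y‖⁻¹ • (x - y) - x = ‖x - y‖⁻¹ • (x - y) := by abel
      rw [this, norm_smul, norm_inv, Real.norm_eq_abs, abs_of_pos hd0,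
        inv_mul_cancel₀ hd0.ne']
    have hlow : ∀ q ∈ Metric.closedBall y 1, dist x y ≤ dist p q := by
      intro q hq
      rw [mem_closedBall] at hq
      have hpy : dist p y = ‖x - y‖ + 1 := by
        rw [dist_eq_norm, hp]
        have : x + ‖x - y‖⁻¹ • (x - y) - y = (1 + ‖x - y‖⁻¹) • (x - y) := by
          rw [add_smul, one_smul]; abel
        rw [this, norm_smul, Real.norm_eq_abs]
        have hpos : (0:ℝ) < 1 + ‖x - y‖⁻¹ := by positivity
        rw [abs_of_pos hpos]
        have hinv : ‖x - y‖⁻¹ * ‖x - y‖ = 1 := inv_mul_cancel₀ hd0.ne'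
        nlinarith
      have htri := dist_triangle p q y
      rw [dist_eq_norm x y]
      rw [hpy] at htri
      linarith
    have h1 : Metric.infDist p (Metric.closedBall y 1) ≤
        Metric.hausdorffDist (Metric.closedBall x 1) (Metric.closedBall y 1) :=
      Metric.infDist_le_hausdorffDist_of_mem hpmem
        (hd_ne_top_pair (Metric.nonempty_closedBall.2 zero_le_one)
          (Metric.nonempty_closedBall.2 zero_le_one)
          Metric.isBounded_closedBall Metric.isBounded_closedBall)
    obtain ⟨q, hq, hdq⟩ := (isCompact_closedBall y 1).exists_infDist_eq_dist
      (Metric.nonempty_closedBall.2 zero_le_one) p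
    rw [hdq] at h1
    exact le_trans (hlow q hq) h1

lemma hd_singleton_ball (hn : 1 ≤ n) (x y : E) :
    Metric.hausdorffDist ({x} : Set E) (Metric.closedBall y 1) = dist x y + 1 := by
  have hr0 : (0:ℝ) ≤ dist x y + 1 := by positivity
  apply le_antisymm
  · apply Metric.hausdorffDist_le_of_mem_dist hr0
    · rintro p rfl
      exact ⟨y, by simp, by linarith⟩
    · intro q hq
      rw [mem_closedBall] at hq
      refine ⟨x, rfl, ?_⟩
      calc dist q x ≤ dist q y + dist y x := dist_triangle q y x
        _ ≤ 1 + dist x y := by rw [dist_comm y x]; linarith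
        _ = dist x y + 1 := by ring
  · -- farthest point of the ball from x
    obtain ⟨u0, hu0⟩ := exists_unit (n:=n) hn
    have key : ∀ w : E, ‖w‖ = 1 → dist (y + w) x = dist x y + 1 →
        dist x y + 1 ≤ Metric.hausdorffDist ({x} : Set E) (Metric.closedBall y 1) := by
      intro w hwn hqx
      have hqmem : y + w ∈ Metric.closedBall y 1 := by
        rw [mem_closedBall, dist_eq_norm]
        have : y + w - y = w := by abel
        rw [this, hwn]
      have h1 : Metric.infDist (y + w) ({x} : Set E) ≤
          Metric.hausdorffDist (Metric.closedBall y 1) ({x} : Set E) :=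
        Metric.infDist_le_hausdorffDist_of_mem hqmem
          (hd_ne_top_pair (Metric.nonempty_closedBall.2 zero_le_one) ⟨x, rfl⟩
            Metric.isBounded_closedBall Bornology.isBounded_singleton)
      rw [Metric.infDist_singleton, Metric.hausdorffDist_comm, hqx] at h1
      exact h1
    rcases eq_or_ne x y with rfl | hxy
    · refine key u0 hu0 ?_
      rw [dist_eq_norm]
      have : x + u0 - x = u0 := by abel
      rw [this, hu0, dist_self]; ring
    · have hd0 : 0 < ‖y - x‖ := by
        rw [norm_pos_iff]; exact sub_ne_zero_of_ne (fun hh => hxy hh.symm)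
      refine key (‖y - x‖⁻¹ • (y - x)) ?_ ?_
      · rw [norm_smul, norm_inv, Real.norm_eq_abs, abs_of_pos hd0, inv_mul_cancel₀ hd0.ne']
      · rw [dist_eq_norm]
        have heq : y + ‖y - x‖⁻¹ • (y - x) - x = (1 + ‖y - x‖⁻¹) • (y - x) := by
          rw [add_smul, one_smul]; abel
        rw [heq, norm_smul, Real.norm_eq_abs]
        have hpos : (0:ℝ) < 1 + ‖y - x‖⁻¹ := by positivity
        rw [abs_of_pos hpos, dist_eq_norm]
        have hinv : ‖y - x‖⁻¹ * ‖y - x‖ = 1 := inv_mul_cancel₀ hd0.ne'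
        have hsym : ‖x - y‖ = ‖y - x‖ := norm_sub_rev x y
        rw [hsym]
        nlinarith



structure Setup (n : ℕ) where
  T : Set (EuclideanSpace ℝ (Fin n)) → Set (EuclideanSpace ℝ (Fin n))
  hT : ∀ K, IsBallBody K → IsBallBody (T K)
  hiso : ∀ K L, IsBallBody K → IsBallBody L →
    Metric.hausdorffDist (T K) (T L) = Metric.hausdorffDist K L
  hn : 1 ≤ n

namespace Setup

def Kb (s : Setup n) (x : EuclideanSpace ℝ (Fin n)) := s.T {x}
def Wb (s : Setup n) (y : EuclideanSpace ℝ (Fin n)) := s.T (Metric.closedBall y 1)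
def f (s : Setup n) (x v : EuclideanSpace ℝ (Fin n)) : ℝ := sfn (s.Kb x) v
def g (s : Setup n) (y v : EuclideanSpace ℝ (Fin n)) : ℝ := sfn (s.Wb y) v

lemma bbK (s : Setup n) (x : E) : IsBallBody (s.Kb x) := s.hT _ (ibb_singleton s.hn x)
lemma bbW (s : Setup n) (y : E) : IsBallBody (s.Wb y) := s.hT _ (ibb_ball y)

lemma dKK (s : Setup n) (x y : E) :
    Metric.hausdorffDist (s.Kb x) (s.Kb y) = dist x y := by
  rw [Kb, Kb, s.hiso _ _ (ibb_singleton s.hn x) (ibb_singleton s.hn y),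
    hd_singleton_singleton]

lemma dWW (s : Setup n) (x y : E) :
    Metric.hausdorffDist (s.Wb x) (s.Wb y) = dist x y := by
  rw [Wb, Wb, s.hiso _ _ (ibb_ball x) (ibb_ball y), hd_ball_ball]

lemma dKW (s : Setup n) (x y : E) :
    Metric.hausdorffDist (s.Kb x) (s.Wb y) = dist x y + 1 := by
  rw [Kb, Wb, s.hiso _ _ (ibb_singleton s.hn x) (ibb_ball y),
    hd_singleton_ball s.hn]

lemma fdiff_le (s : Setup n) (x y : E) {v : E} (hv : ‖v‖ = 1) :
    |s.f x v - s.f y v| ≤ dist x y := by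
  have := sfn_sub_abs_le_hd (s.bbK x) (s.bbK y) hv
  rwa [s.dKK] at this

lemma gdiff_le (s : Setup n) (x y : E) {v : E} (hv : ‖v‖ = 1) :
    |s.g x v - s.g y v| ≤ dist x y := by
  have := sfn_sub_abs_le_hd (s.bbW x) (s.bbW y) hv
  rwa [s.dWW] at this

lemma fgdiff_le (s : Setup n) (x y : E) {v : E} (hv : ‖v‖ = 1) :
    |s.f x v - s.g y v| ≤ dist x y + 1 := by
  have := sfn_sub_abs_le_hd (s.bbK x) (s.bbW y) hv
  rwa [s.dKW] at this

lemma dist_smul_unit {u : E} (hu : ‖u‖ = 1) (t r : ℝ) :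
    dist (t • u) (r • u) = |t - r| := by
  rw [dist_eq_norm, ← sub_smul, norm_smul, hu, mul_one, Real.norm_eq_abs]

/-- Step A: on a bounded range, an extremal direction for the pair
`(K (R•u), W (-R•u))` forces linear behaviour of the support functions. -/
lemma stepA (s : Setup n) {u : E} (hu : ‖u‖ = 1) {R : ℝ} (hR : 0 < R) :
    ∃ v : E, ‖v‖ = 1 ∧ ∃ σ : ℝ, (σ = 1 ∨ σ = -1) ∧ ∀ t : ℝ, |t| ≤ R →
      s.f (t • u) v = s.f 0 v + σ * t ∧ s.g (t • u) v = s.f (t • u) v - σ := by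
  obtain ⟨v, hv, hattain⟩ := hd_attained s.hn (s.bbK (R • u)) (s.bbW ((-R) • u))
  rw [s.dKW, dist_smul_unit hu] at hattain
  have hRR : |R - -R| = 2 * R := by rw [abs_of_pos (by linarith)]; ring
  rw [hRR] at hattain
  have key : ∀ σ : ℝ, (σ = 1 ∨ σ = -1) →
      s.f (R • u) v - s.g ((-R) • u) v = σ * (2 * R + 1) →
      ∀ t : ℝ, |t| ≤ R →
      s.f (t • u) v = s.f (R • u) v - σ * (R - t) ∧
        s.g (t • u) v = s.f (t • u) v - σ := by
    intro σ hσ heq t ht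
    rw [abs_le] at ht
    have b1 : |s.f (R • u) v - s.f (t • u) v| ≤ R - t := by
      have := s.fdiff_le (R • u) (t • u) hv
      rw [dist_smul_unit hu] at this
      rwa [abs_of_nonneg (by linarith : (0:ℝ) ≤ R - t)] at this
    have b2 : |s.f (t • u) v - s.g (t • u) v| ≤ 1 := by
      have := s.fgdiff_le (t • u) (t • u) hv
      rwa [dist_self, zero_add] at this
    have b3 : |s.g (t • u) v - s.g ((-R) • u) v| ≤ t + R := by
      have := s.gdiff_le (t • u) ((-R) • u) hv
      rw [dist_smul_unit hu] at this
      rwa [abs_of_nonneg (by linarith : (0:ℝ) ≤ t - -R), sub_neg_eq_add] at this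
    rw [abs_le] at b1 b2 b3
    rcases hσ with rfl | rfl
    · constructor
      · have : s.f (R • u) v - s.f (t • u) v = R - t := by linarith
        linarith
      · have : s.f (t • u) v - s.g (t • u) v = 1 := by linarith
        linarith
    · constructor
      · have : s.f (R • u) v - s.f (t • u) v = -(R - t) := by linarith
        linarith
      · have : s.f (t • u) v - s.g (t • u) v = -1 := by linarith
        linarith
  have h2R : (0:ℝ) ≤ 2 * R + 1 := by linarith
  rcases (abs_eq h2R).1 hattain with heq | heq
  · have heq' : s.f (R • u) v - s.g ((-R) • u) v = 1 * (2 * R + 1) := by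
      rw [one_mul]; exact heq
    refine ⟨v, hv, 1, Or.inl rfl, fun t ht => ?_⟩
    have hk := key 1 (Or.inl rfl) heq' t ht
    have h0 := key 1 (Or.inl rfl) heq' 0 (by rw [abs_zero]; linarith)
    rw [zero_smul] at h0
    refine ⟨?_, hk.2⟩
    rw [hk.1, h0.1]; ring
  · have heq' : s.f (R • u) v - s.g ((-R) • u) v = (-1) * (2 * R + 1) := by
      rw [neg_one_mul]; exact heq
    refine ⟨v, hv, -1, Or.inr rfl, fun t ht => ?_⟩
    have hk := key (-1) (Or.inr rfl) heq' t ht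
    have h0 := key (-1) (Or.inr rfl) heq' 0 (by rw [abs_zero]; linarith)
    rw [zero_smul] at h0
    refine ⟨?_, hk.2⟩
    rw [hk.1, h0.1]; ring




def P (s : Setup n) (u v : EuclideanSpace ℝ (Fin n)) (σ : ℝ) : Prop :=
  ∀ t : ℝ, s.f (t • u) v = s.f 0 v + σ * t ∧ s.g (t • u) v = s.f (t • u) v - σ

lemma stepB (s : Setup n) {u : E} (hu : ‖u‖ = 1) :
    ∃ v : E, ‖v‖ = 1 ∧ ∃ σ : ℝ, (σ = 1 ∨ σ = -1) ∧ s.P u v σ := by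
  have H : ∀ k : ℕ, ∃ p : (EuclideanSpace ℝ (Fin n)) × ℝ, ‖p.1‖ = 1 ∧
      (p.2 = 1 ∨ p.2 = -1) ∧
      ∀ t : ℝ, |t| ≤ (k:ℝ) + 1 →
        s.f (t • u) p.1 = s.f 0 p.1 + p.2 * t ∧
          s.g (t • u) p.1 = s.f (t • u) p.1 - p.2 := by
    intro k
    obtain ⟨v, hv, σ, hσ, hprop⟩ := s.stepA hu (R := (k:ℝ)+1) (by positivity)
    exact ⟨(v, σ), hv, hσ, hprop⟩
  choose Q h1 h2 h3 using H
  have hcs : IsCompact ((Metric.sphere (0:E) 1) ×ˢ ({1,-1} : Set ℝ)) :=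
    (isCompact_sphere 0 1).prod ((Set.toFinite ({1,-1} : Set ℝ)).isCompact)
  have hmem : ∀ k, Q k ∈ (Metric.sphere (0:E) 1) ×ˢ ({1,-1} : Set ℝ) := by
    intro k
    refine ⟨by simpa using h1 k, ?_⟩
    rcases h2 k with h | h
    · exact Or.inl h
    · exact Or.inr (by simp [h])
  obtain ⟨⟨v, σ⟩, hvσ, φ, hφ, hconv⟩ := hcs.tendsto_subseq hmem
  have hv1 : ‖v‖ = 1 := by simpa using hvσ.1
  have hσmem : σ = 1 ∨ σ = -1 := by
    rcases hvσ.2 with h | h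
    · exact Or.inl h
    · exact Or.inr (by simpa using h)
  have hvconv : Tendsto (fun k => (Q (φ k)).1) atTop (𝓝 v) :=
    (continuous_fst.tendsto _).comp hconv
  have hσconv : Tendsto (fun k => (Q (φ k)).2) atTop (𝓝 σ) :=
    (continuous_snd.tendsto _).comp hconv
  have hev : ∀ᶠ k in atTop, (Q (φ k)).2 = σ := by
    have hball := Metric.tendsto_nhds.1 hσconv 1 one_pos
    filter_upwards [hball] with k hk
    rcases h2 (φ k) with h | h <;> rcases hσmem with h' | h' <;>
      rw [h, h'] at hk ⊢ <;> first | rfl |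
        (exfalso; rw [Real.dist_eq] at hk; norm_num at hk)
  refine ⟨v, hv1, σ, hσmem, fun t => ?_⟩
  have hevt : ∀ᶠ k in atTop,
      (s.f (t • u) ((Q (φ k)).1) = s.f 0 ((Q (φ k)).1) + σ * t ∧
        s.g (t • u) ((Q (φ k)).1) = s.f (t • u) ((Q (φ k)).1) - σ) := by
    have hk0 : ∀ᶠ k : ℕ in atTop, |t| ≤ (k:ℝ) := by
      obtain ⟨N, hN⟩ := exists_nat_ge |t|
      exact eventually_atTop.2 ⟨N, fun k hk => le_trans hN (by exact_mod_cast hk)⟩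
    filter_upwards [hev, hk0] with k hkσ hkt
    have hkb : |t| ≤ ((φ k : ℕ):ℝ) + 1 := by
      have h1' : (k:ℝ) ≤ (φ k : ℝ) := by exact_mod_cast hφ.le_apply
      linarith
    have := h3 (φ k) t hkb
    rwa [hkσ] at this
  have lf : Tendsto (fun k => s.f (t • u) ((Q (φ k)).1)) atTop (𝓝 (s.f (t • u) v)) :=
    ((sfn_cont (s.bbK (t • u))).tendsto v).comp hvconv
  have lf0 : Tendsto (fun k => s.f 0 ((Q (φ k)).1)) atTop (𝓝 (s.f 0 v)) :=
    ((sfn_cont (s.bbK 0)).tendsto v).comp hvconv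
  have lg : Tendsto (fun k => s.g (t • u) ((Q (φ k)).1)) atTop (𝓝 (s.g (t • u) v)) :=
    ((sfn_cont (s.bbW (t • u))).tendsto v).comp hvconv
  have e1 : Tendsto (fun k => s.f (t • u) ((Q (φ k)).1)) atTop (𝓝 (s.f 0 v + σ * t)) := by
    refine Tendsto.congr' ?_ (lf0.add_const (σ * t))
    filter_upwards [hevt] with k hk
    exact hk.1.symm
  have e2 : Tendsto (fun k => s.g (t • u) ((Q (φ k)).1)) atTop (𝓝 (s.f (t • u) v - σ)) := by
    refine Tendsto.congr' ?_ (lf.sub_const σ)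
    filter_upwards [hevt] with k hk
    exact hk.2.symm
  exact ⟨tendsto_nhds_unique lf e1, tendsto_nhds_unique lg e2⟩




def q (s : Setup n) (x : EuclideanSpace ℝ (Fin n)) : EuclideanSpace ℝ (Fin n) :=
  (s.bbK x).1.some

lemma q_mem (s : Setup n) (x : E) : s.q x ∈ s.Kb x := (s.bbK x).1.some_mem

lemma qf_bound (s : Setup n) (x : E) {w : E} (hw : ‖w‖ = 1) :
    |⟪s.q x, w⟫ - s.f x w| ≤ 2 := by
  obtain ⟨h1, h2⟩ := bb_near_point (s.bbK x) (s.q_mem x) hw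
  have hfx : s.f x w = sfn (s.Kb x) w := rfl
  rw [hfx, abs_le]
  constructor <;> linarith

/-- a vector whose inner products against all unit vectors are `≤ r` has norm `≤ r` -/
lemma norm_le_of_inner (hn : 1 ≤ n) {x : E} {r : ℝ} (hr : 0 ≤ r)
    (h : ∀ w : E, ‖w‖ = 1 → ⟪x, w⟫ ≤ r) : ‖x‖ ≤ r := by
  rcases eq_or_ne x 0 with rfl | hx
  · rwa [norm_zero]
  · have hx0 : 0 < ‖x‖ := norm_pos_iff.2 hx
    have := h (‖x‖⁻¹ • x) (by
      rw [norm_smul, norm_inv, Real.norm_eq_abs, abs_of_pos hx0, inv_mul_cancel₀ hx0.ne'])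
    rw [real_inner_smul_right, real_inner_self_eq_norm_sq] at this
    calc ‖x‖ = ‖x‖⁻¹ * (‖x‖ * ‖x‖) := by field_simp
      _ ≤ r := by rw [← sq]; exact this

lemma qq_upper (s : Setup n) (x y : E) : ‖s.q x - s.q y‖ ≤ dist x y + 4 := by
  refine norm_le_of_inner s.hn (by positivity) (fun w hw => ?_)
  have h1 := s.qf_bound x hw
  have h2 := s.qf_bound y hw
  have h3 := s.fdiff_le x y hw
  have h4 : ⟪s.q x - s.q y, w⟫ = ⟪s.q x, w⟫ - ⟪s.q y, w⟫ := inner_sub_left _ _ _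
  rw [abs_le] at h1 h2 h3
  linarith

lemma qq_lower (s : Setup n) (x y : E) : dist x y ≤ ‖s.q x - s.q y‖ + 2 := by
  have := s.dKK x y
  rw [← this]
  apply Metric.hausdorffDist_le_of_mem_dist (by positivity)
  · intro a ha
    refine ⟨s.q y, s.q_mem y, ?_⟩
    calc dist a (s.q y) ≤ dist a (s.q x) + dist (s.q x) (s.q y) := dist_triangle _ _ _
      _ ≤ 2 + ‖s.q x - s.q y‖ := by
          rw [dist_eq_norm]
          exact add_le_add (bb_diam (s.bbK x) ha (s.q_mem x)) (le_refl _)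
      _ = ‖s.q x - s.q y‖ + 2 := by ring
  · intro a ha
    refine ⟨s.q x, s.q_mem x, ?_⟩
    calc dist a (s.q x) ≤ dist a (s.q y) + dist (s.q y) (s.q x) := dist_triangle _ _ _
      _ ≤ 2 + ‖s.q x - s.q y‖ := by
          rw [dist_comm (s.q y) (s.q x), dist_eq_norm]
          exact add_le_add (bb_diam (s.bbK y) ha (s.q_mem y)) (le_refl _)
      _ = ‖s.q x - s.q y‖ + 2 := by ring

/-- quantitative approximation: the selected points drift linearly in direction `σ • v` -/
lemma estQ (s : Setup n) {u v : E} (hu : ‖u‖ = 1) (hv : ‖v‖ = 1) {σ : ℝ}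
    (hσ : σ = 1 ∨ σ = -1)
    (hf : ∀ t : ℝ, s.f (t • u) v = s.f 0 v + σ * t) (t : ℝ) (ht : 1 ≤ |t|) :
    ‖(s.q (t • u) - s.q 0) - (σ * t) • v‖ ^ 2 ≤ 32 * |t| := by
  set Q := s.q (t • u) - s.q 0 with hQ
  have hσ2 : σ ^ 2 = 1 := by rcases hσ with rfl | rfl <;> norm_num
  have hσa : |σ| = 1 := by rcases hσ with rfl | rfl <;> norm_num
  -- inner product along v
  have hfv : s.f (t • u) v - s.f 0 v = σ * t := by rw [hf t]; ring
  have hQv : |⟪Q, v⟫ - σ * t| ≤ 4 := by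
    have h1 := s.qf_bound (t • u) hv
    have h2 := s.qf_bound 0 hv
    have h3 : ⟪Q, v⟫ = ⟪s.q (t • u), v⟫ - ⟪s.q 0, v⟫ := inner_sub_left _ _ _
    rw [abs_le] at h1 h2 ⊢
    constructor <;> [linarith; linarith]
  -- norm bound
  have hQn : ‖Q‖ ≤ |t| + 4 := by
    refine norm_le_of_inner s.hn (by positivity) (fun w hw => ?_)
    have h1 := s.qf_bound (t • u) hw
    have h2 := s.qf_bound 0 hw
    have h3 := s.fdiff_le (t • u) 0 hw
    have h4 : dist (t • u) (0:E) = |t| := by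
      rw [dist_zero_right, norm_smul, hu, mul_one, Real.norm_eq_abs]
    rw [h4] at h3
    have h5 : ⟪Q, w⟫ = ⟪s.q (t • u), w⟫ - ⟪s.q 0, w⟫ := inner_sub_left _ _ _
    rw [abs_le] at h1 h2 h3
    linarith
  -- expand the square
  have hexp : ‖Q - (σ * t) • v‖ ^ 2 =
      ‖Q‖ ^ 2 - 2 * (σ * t * ⟪Q, v⟫) + (σ * t) ^ 2 := by
    rw [norm_sub_sq_real, real_inner_smul_right, norm_smul]
    rw [Real.norm_eq_abs, abs_mul, hσa, one_mul, mul_pow, sq_abs, hv]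
    rw [mul_pow, hσ2]
    ring
  rw [hexp]
  have hst : σ * t * ⟪Q, v⟫ ≥ t ^ 2 - 4 * |t| := by
    have h6 : σ * t * ⟪Q, v⟫ = σ * t * (⟪Q, v⟫ - σ * t) + σ ^ 2 * t ^ 2 := by ring
    have h7 : σ * t * (⟪Q, v⟫ - σ * t) ≥ -(4 * |t|) := by
      have h8 : |σ * t * (⟪Q, v⟫ - σ * t)| ≤ 4 * |t| := by
        rw [abs_mul, abs_mul, hσa, one_mul]
        calc |t| * |⟪Q, v⟫ - σ * t| ≤ |t| * 4 := by
              apply mul_le_mul_of_nonneg_left hQv (abs_nonneg t)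
          _ = 4 * |t| := by ring
      linarith [abs_le.1 h8]
    rw [hσ2] at h6
    linarith
  have hQn2 : ‖Q‖ ^ 2 ≤ (|t| + 4) ^ 2 := by
    apply sq_le_sq' <;> nlinarith [norm_nonneg Q, abs_nonneg t]
  have ht2 : t ^ 2 = |t| ^ 2 := (sq_abs t).symm
  have hσt2 : (σ * t) ^ 2 = t ^ 2 := by rw [mul_pow, hσ2, one_mul]
  rw [hσt2]
  nlinarith [abs_nonneg t]

/-- quantities whose square is `O(1/k)` vanish -/
lemma eq_zero_of_sq_le {X c : ℝ} (h : ∀ k : ℕ, 1 ≤ k → X ^ 2 ≤ c / (k:ℝ)) : X = 0 := by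
  have h2 : X ^ 2 ≤ 0 := by
    by_contra hc
    push_neg at hc
    obtain ⟨k, hk⟩ := exists_nat_gt (c / X ^ 2)
    have hk1 : 1 ≤ k + 1 := by omega
    have := h (k + 1) hk1
    have hkpos : (0:ℝ) < (k:ℝ) + 1 := by positivity
    have hck : c / ((k:ℝ) + 1) < X ^ 2 := by
      rw [div_lt_iff₀ hkpos]
      have h9 : c / X ^ 2 < (k:ℝ) + 1 := by linarith
      calc c = (c / X ^ 2) * X ^ 2 := (div_mul_cancel₀ c hc.ne').symm
        _ < ((k:ℝ) + 1) * X ^ 2 := by apply mul_lt_mul_of_pos_right h9 hc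
        _ = X ^ 2 * ((k:ℝ) + 1) := by ring
    push_cast at this
    linarith
  have h3 : X ^ 2 = 0 := le_antisymm h2 (sq_nonneg X)
  exact pow_eq_zero_iff (by norm_num) |>.1 h3

/-- uniqueness of the asymptotic direction -/
lemma productEq (s : Setup n) {u v v' : E} (hu : ‖u‖ = 1) (hv : ‖v‖ = 1)
    (hv' : ‖v'‖ = 1) {σ σ' : ℝ} (hσ : σ = 1 ∨ σ = -1) (hσ' : σ' = 1 ∨ σ' = -1)
    (hf : ∀ t : ℝ, s.f (t • u) v = s.f 0 v + σ * t)
    (hf' : ∀ t : ℝ, s.f (t • u) v' = s.f 0 v' + σ' * t) :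
    σ • v = σ' • v' := by
  rw [← sub_eq_zero, ← norm_eq_zero]
  apply eq_zero_of_sq_le (c := 128)
  intro k hk
  have hk1 : (1:ℝ) ≤ |(k:ℝ)| := by
    rw [abs_of_nonneg (Nat.cast_nonneg k)]; exact_mod_cast hk
  have hkabs : |(k:ℝ)| = (k:ℝ) := abs_of_nonneg (Nat.cast_nonneg k)
  have e1 := s.estQ hu hv hσ hf (k:ℝ) hk1
  have e2 := s.estQ hu hv' hσ' hf' (k:ℝ) hk1
  rw [hkabs] at e1 e2
  set Q := s.q ((k:ℝ) • u) - s.q 0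
  have hkpos : (0:ℝ) < (k:ℝ) := by exact_mod_cast Nat.lt_of_lt_of_le Nat.zero_lt_one hk
  have htri : (k:ℝ) * ‖σ • v - σ' • v'‖ ≤
      ‖Q - (σ * (k:ℝ)) • v‖ + ‖Q - (σ' * (k:ℝ)) • v'‖ := by
    have : (σ * (k:ℝ)) • v - (σ' * (k:ℝ)) • v' = (k:ℝ) • (σ • v - σ' • v') := by
      rw [smul_sub, smul_smul, smul_smul]; ring_nf
    calc (k:ℝ) * ‖σ • v - σ' • v'‖ = ‖(k:ℝ) • (σ • v - σ' • v')‖ := by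
          rw [norm_smul, Real.norm_eq_abs, hkabs]
      _ = ‖(σ * (k:ℝ)) • v - (σ' * (k:ℝ)) • v'‖ := by rw [this]
      _ = ‖((σ * (k:ℝ)) • v - Q) + (Q - (σ' * (k:ℝ)) • v')‖ := by congr 1; abel
      _ ≤ ‖(σ * (k:ℝ)) • v - Q‖ + ‖Q - (σ' * (k:ℝ)) • v'‖ := norm_add_le _ _
      _ = ‖Q - (σ * (k:ℝ)) • v‖ + ‖Q - (σ' * (k:ℝ)) • v'‖ := by rw [norm_sub_rev]
  have hsq : ((k:ℝ) * ‖σ • v - σ' • v'‖) ^ 2 ≤ 128 * (k:ℝ) := by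
    have ha := norm_nonneg (Q - (σ * (k:ℝ)) • v)
    have hb := norm_nonneg (Q - (σ' * (k:ℝ)) • v')
    have hc := norm_nonneg (σ • v - σ' • v')
    have hX : 0 ≤ (k:ℝ) * ‖σ • v - σ' • v'‖ := mul_nonneg hkpos.le hc
    have h1 := mul_self_le_mul_self hX htri
    nlinarith [sq_nonneg (‖Q - (σ * (k:ℝ)) • v‖ - ‖Q - (σ' * (k:ℝ)) • v'‖)]
  rw [le_div_iff₀ hkpos]
  nlinarith [hsq, hkpos]




set_option maxHeartbeats 1600000 in
/-- the asymptotic direction map preserves distances -/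
lemma productDist (s : Setup n) {u u' v v' : E} (hu : ‖u‖ = 1) (hu' : ‖u'‖ = 1)
    (hv : ‖v‖ = 1) (hv' : ‖v'‖ = 1) {σ σ' : ℝ} (hσ : σ = 1 ∨ σ = -1)
    (hσ' : σ' = 1 ∨ σ' = -1)
    (hf : ∀ t : ℝ, s.f (t • u) v = s.f 0 v + σ * t)
    (hf' : ∀ t : ℝ, s.f (t • u') v' = s.f 0 v' + σ' * t) :
    ‖σ • v - σ' • v'‖ = ‖u - u'‖ := by
  rw [← sub_eq_zero]
  apply eq_zero_of_sq_le (c := 240)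
  intro k hk
  have hk1 : (1:ℝ) ≤ |(k:ℝ)| := by
    rw [abs_of_nonneg (Nat.cast_nonneg k)]; exact_mod_cast hk
  have hkabs : |(k:ℝ)| = (k:ℝ) := abs_of_nonneg (Nat.cast_nonneg k)
  have hkpos : (0:ℝ) < (k:ℝ) := by exact_mod_cast Nat.lt_of_lt_of_le Nat.zero_lt_one hk
  have e1 := s.estQ hu hv hσ hf (k:ℝ) hk1
  have e2 := s.estQ hu' hv' hσ' hf' (k:ℝ) hk1
  rw [hkabs] at e1 e2
  set a := ‖(s.q ((k:ℝ) • u) - s.q 0) - (σ * (k:ℝ)) • v‖ with ha_def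
  set b := ‖(s.q ((k:ℝ) • u') - s.q 0) - (σ' * (k:ℝ)) • v'‖ with hb_def
  have ha := norm_nonneg ((s.q ((k:ℝ) • u) - s.q 0) - (σ * (k:ℝ)) • v)
  have hb := norm_nonneg ((s.q ((k:ℝ) • u') - s.q 0) - (σ' * (k:ℝ)) • v')
  set D := ‖σ • v - σ' • v'‖ with hD_def
  have hD := norm_nonneg (σ • v - σ' • v')
  set d := ‖u - u'‖ with hd_def
  -- distance between the selected points
  have hdist : dist ((k:ℝ) • u) ((k:ℝ) • u') = (k:ℝ) * d := by
    rw [dist_eq_norm, ← smul_sub, norm_smul, Real.norm_eq_abs, hkabs]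
  have hup : ‖s.q ((k:ℝ) • u) - s.q ((k:ℝ) • u')‖ ≤ (k:ℝ) * d + 4 := by
    have := s.qq_upper ((k:ℝ) • u) ((k:ℝ) • u')
    rwa [hdist] at this
  have hlo : (k:ℝ) * d ≤ ‖s.q ((k:ℝ) • u) - s.q ((k:ℝ) • u')‖ + 2 := by
    have := s.qq_lower ((k:ℝ) • u) ((k:ℝ) • u')
    rwa [hdist] at this
  -- scaled difference of the directions
  have hscale : (k:ℝ) * D = ‖(σ * (k:ℝ)) • v - (σ' * (k:ℝ)) • v'‖ := by
    have hcomb : (σ * (k:ℝ)) • v - (σ' * (k:ℝ)) • v' = (k:ℝ) • (σ • v - σ' • v') := by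
      rw [smul_sub, smul_smul, smul_smul]; ring_nf
    rw [hcomb, norm_smul, Real.norm_eq_abs, hkabs]
  -- triangle inequalities through the q-points
  have hQsplit : s.q ((k:ℝ) • u) - s.q ((k:ℝ) • u') =
      ((s.q ((k:ℝ) • u) - s.q 0) - (s.q ((k:ℝ) • u') - s.q 0)) := by abel
  have htri1 : (k:ℝ) * D ≤ a + b + ‖s.q ((k:ℝ) • u) - s.q ((k:ℝ) • u')‖ := by
    rw [hscale]
    calc ‖(σ * (k:ℝ)) • v - (σ' * (k:ℝ)) • v'‖
        = ‖((σ * (k:ℝ)) • v - (s.q ((k:ℝ) • u) - s.q 0)) +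
            ((s.q ((k:ℝ) • u) - s.q ((k:ℝ) • u'))) +
            ((s.q ((k:ℝ) • u') - s.q 0) - (σ' * (k:ℝ)) • v')‖ := by
          congr 1; rw [hQsplit]; abel
      _ ≤ ‖((σ * (k:ℝ)) • v - (s.q ((k:ℝ) • u) - s.q 0)) +
            ((s.q ((k:ℝ) • u) - s.q ((k:ℝ) • u')))‖ +
            ‖(s.q ((k:ℝ) • u') - s.q 0) - (σ' * (k:ℝ)) • v'‖ := norm_add_le _ _
      _ ≤ ‖(σ * (k:ℝ)) • v - (s.q ((k:ℝ) • u) - s.q 0)‖ +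
            ‖s.q ((k:ℝ) • u) - s.q ((k:ℝ) • u')‖ + b := by
          rw [hb_def]
          exact add_le_add_left (norm_add_le _ _) _
      _ = a + b + ‖s.q ((k:ℝ) • u) - s.q ((k:ℝ) • u')‖ := by
          rw [ha_def, norm_sub_rev]; ring
  have htri2 : ‖s.q ((k:ℝ) • u) - s.q ((k:ℝ) • u')‖ ≤ a + b + (k:ℝ) * D := by
    rw [hscale]
    calc ‖s.q ((k:ℝ) • u) - s.q ((k:ℝ) • u')‖
        = ‖((s.q ((k:ℝ) • u) - s.q 0) - (σ * (k:ℝ)) • v) +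
            ((σ * (k:ℝ)) • v - (σ' * (k:ℝ)) • v') +
            ((σ' * (k:ℝ)) • v' - (s.q ((k:ℝ) • u') - s.q 0))‖ := by
          congr 1; rw [hQsplit]; abel
      _ ≤ ‖((s.q ((k:ℝ) • u) - s.q 0) - (σ * (k:ℝ)) • v) +
            ((σ * (k:ℝ)) • v - (σ' * (k:ℝ)) • v')‖ +
            ‖(σ' * (k:ℝ)) • v' - (s.q ((k:ℝ) • u') - s.q 0)‖ := norm_add_le _ _
      _ ≤ a + ‖(σ * (k:ℝ)) • v - (σ' * (k:ℝ)) • v'‖ + b := by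
          rw [ha_def, hb_def, norm_sub_rev ((σ' * (k:ℝ)) • v')]
          exact add_le_add_left (norm_add_le _ _) _
      _ = a + b + ‖(σ * (k:ℝ)) • v - (σ' * (k:ℝ)) • v'‖ := by ring
  -- combine
  have hX1 : (k:ℝ) * D - (k:ℝ) * d ≤ a + b + 4 := by linarith
  have hX2 : -(a + b + 4) ≤ (k:ℝ) * D - (k:ℝ) * d := by linarith
  have hsq : ((k:ℝ) * D - (k:ℝ) * d) ^ 2 ≤ (a + b + 4) ^ 2 := sq_le_sq' hX2 hX1
  have hsq2 : (a + b + 4) ^ 2 ≤ 240 * (k:ℝ) := by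
    nlinarith [sq_nonneg (a - b), e1, e2, hk1, hkabs]
  have hfactor : ((k:ℝ) * D - (k:ℝ) * d) ^ 2 = (D - d) ^ 2 * (k:ℝ) ^ 2 := by ring
  have hkey : (D - d) ^ 2 * (k:ℝ) ^ 2 ≤ 240 * (k:ℝ) := by
    rw [← hfactor]; exact le_trans hsq hsq2
  rw [le_div_iff₀ hkpos]
  nlinarith [hkey, hkpos, sq_nonneg (D - d)]

/-- a distance preserving self-map of a compact metric space is surjective -/
lemma surj_of_dist_preserving {X : Type*} [MetricSpace X] [CompactSpace X]
    (F : X → X) (hF : ∀ a b, dist (F a) (F b) = dist a b) :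
    Function.Surjective F := by
  intro y
  have hcont : Continuous F := (Isometry.of_dist_eq hF).continuous
  have hclosed : IsClosed (Set.range F) := (isCompact_range hcont).isClosed
  have hmem : y ∈ closure (Set.range F) := by
    rw [Metric.mem_closure_iff]
    intro ε hε
    have hiter : ∀ (k : ℕ) (a b : X), dist (F^[k] a) (F^[k] b) = dist a b := by
      intro k
      induction k with
      | zero => intro a b; simp
      | succ m ih =>
          intro a b
          rw [Function.iterate_succ_apply', Function.iterate_succ_apply', hF]
          exact ih a b
    obtain ⟨x, φ, hφ, hconv⟩ := CompactSpace.tendsto_subseq (fun k => F^[k] y)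
    have hcauchy := hconv.cauchySeq
    rw [Metric.cauchySeq_iff] at hcauchy
    obtain ⟨N, hN⟩ := hcauchy ε hε
    have h1 := hN (N+1) (by omega) N (le_refl N)
    simp only [Function.comp] at h1
    have hlt : φ N < φ (N+1) := hφ (by omega)
    obtain ⟨j, hj1, hsum⟩ : ∃ j, 1 ≤ j ∧ φ N + j = φ (N+1) :=
      ⟨φ (N+1) - φ N, by omega, by omega⟩
    have h2 : dist (F^[j] y) y < ε := by
      have h3 := hiter (φ N) (F^[j] y) y
      rw [← Function.iterate_add_apply, hsum] at h3
      rw [← h3]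
      exact h1
    obtain ⟨m, rfl⟩ : ∃ m, j = m + 1 := ⟨j - 1, by omega⟩
    refine ⟨F^[m+1] y, ⟨F^[m] y, (Function.iterate_succ_apply' F m y).symm⟩, ?_⟩
    rw [dist_comm]
    exact h2
  rwa [hclosed.closure_eq] at hmem

/-- every unit vector arises as an asymptotic direction -/
lemma exists_preimage (s : Setup n) {w : E} (hw : ‖w‖ = 1) :
    ∃ u v : E, ∃ σ : ℝ, ‖u‖ = 1 ∧ ‖v‖ = 1 ∧ (σ = 1 ∨ σ = -1) ∧
      s.P u v σ ∧ σ • v = w := by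
  have HS : ∀ u : Metric.sphere (0:E) 1, ∃ vσ : (EuclideanSpace ℝ (Fin n)) × ℝ,
      ‖vσ.1‖ = 1 ∧ (vσ.2 = 1 ∨ vσ.2 = -1) ∧ s.P u.1 vσ.1 vσ.2 := by
    intro u
    obtain ⟨v, hv, σ, hσ, hp⟩ := s.stepB (mem_sphere_zero_iff_norm.1 u.2)
    exact ⟨(v, σ), hv, hσ, hp⟩
  choose VS h1 h2 h3 using HS
  have hΦnorm : ∀ u : Metric.sphere (0:E) 1, ‖(VS u).2 • (VS u).1‖ = 1 := by
    intro u
    rw [norm_smul, h1 u, mul_one, Real.norm_eq_abs]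
    rcases h2 u with h | h <;> rw [h] <;> norm_num
  set Φ : Metric.sphere (0:E) 1 → Metric.sphere (0:E) 1 :=
    fun u => ⟨(VS u).2 • (VS u).1, mem_sphere_zero_iff_norm.2 (hΦnorm u)⟩ with hΦ
  haveI : CompactSpace (Metric.sphere (0:E) 1) :=
    isCompact_iff_compactSpace.1 (isCompact_sphere 0 1)
  have hisom : ∀ a b : Metric.sphere (0:E) 1, dist (Φ a) (Φ b) = dist a b := by
    intro a b
    rw [Subtype.dist_eq, Subtype.dist_eq, dist_eq_norm, dist_eq_norm]
    exact s.productDist (mem_sphere_zero_iff_norm.1 a.2) (mem_sphere_zero_iff_norm.1 b.2)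
      (h1 a) (h1 b) (h2 a) (h2 b) (fun t => (h3 a t).1) (fun t => (h3 b t).1)
  obtain ⟨u, hu⟩ := surj_of_dist_preserving Φ hisom ⟨w, mem_sphere_zero_iff_norm.2 hw⟩
  refine ⟨u.1, (VS u).1, (VS u).2, mem_sphere_zero_iff_norm.1 u.2, h1 u, h2 u, h3 u, ?_⟩
  have := congrArg Subtype.val hu
  exact this




/-- at every unit direction the supports of `T{0}` and `T(B(0,1))` differ by a constant sign -/
lemma sigma_at (s : Setup n) {w : E} (hw : ‖w‖ = 1) :
    ∃ σ : ℝ, (σ = 1 ∨ σ = -1) ∧ s.g 0 w = s.f 0 w - σ ∧ s.g 0 (-w) = s.f 0 (-w) - σ := by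
  obtain ⟨u, v, σ, hu, hv, hσ, hP, hψ⟩ := s.exists_preimage hw
  obtain ⟨v', hv', σ', hσ', hP'⟩ := s.stepB (u := -u) (by rwa [norm_neg])
  -- virtual witness for -u from the witness for u
  have hfvirt : ∀ t : ℝ, s.f (t • (-u)) v = s.f 0 v + (-σ) * t := by
    intro t
    have h1 : t • (-u) = (-t) • u := by rw [smul_neg, ← neg_smul]
    rw [h1, (hP (-t)).1]; ring
  have hσneg : -σ = 1 ∨ -σ = -1 := by rcases hσ with rfl | rfl <;> norm_num
  have hprod : σ' • v' = (-σ) • v :=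
    s.productEq (u := -u) (by rwa [norm_neg]) hv' hv hσ' hσneg
      (fun t => (hP' t).1) hfvirt
  -- the two g-relations at t = 0
  have hg : s.g 0 v = s.f 0 v - σ := by
    have := (hP 0).2
    rwa [zero_smul] at this
  have hg' : s.g 0 v' = s.f 0 v' - σ' := by
    have := (hP' 0).2
    rwa [zero_smul] at this
  -- case analysis on the signs
  have hcases : (σ' = σ ∧ v' = -v) ∨ (σ' = -σ ∧ v' = v) := by
    rcases hσ with rfl | rfl <;> rcases hσ' with rfl | rfl
    · left
      refine ⟨rfl, ?_⟩
      rw [one_smul] at hprod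
      rw [hprod, neg_one_smul]
    · right
      refine ⟨by norm_num, ?_⟩
      rw [neg_one_smul, neg_one_smul] at hprod
      exact neg_injective hprod
    · right
      refine ⟨by norm_num, ?_⟩
      rw [one_smul] at hprod
      rw [hprod]
      norm_num
    · left
      refine ⟨rfl, ?_⟩
      have hp2 : -v' = v := by
        rw [neg_one_smul] at hprod
        rw [hprod]
        norm_num
      have hp3 := congrArg Neg.neg hp2
      simpa using hp3
  rcases hcases with ⟨hss, hvv⟩ | ⟨hss, hvv⟩
  · -- good case : v' = -v, σ' = σ
    rw [hss, hvv] at hg'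
    -- now hg : g 0 v = f 0 v - σ ; hg' : g 0 (-v) = f 0 (-v) - σ
    -- and σ • v = w
    rcases hσ with rfl | rfl
    · rw [one_smul] at hψ
      subst hψ
      exact ⟨1, Or.inl rfl, hg, hg'⟩
    · rw [neg_one_smul] at hψ
      have hvw : v = -w := by rw [← hψ]; abel
      subst hvw
      rw [neg_neg] at hg'
      exact ⟨-1, Or.inr rfl, hg', hg⟩
  · -- impossible case : v' = v, σ' = -σ
    exfalso
    rw [hss, hvv] at hg'
    rw [hg'] at hg
    have : σ = 0 := by linarith
    rcases hσ with rfl | rfl <;> norm_num at this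

/-- dichotomy of widths -/
lemma width_dichotomy (s : Setup n) {w : E} (hw : ‖w‖ = 1) :
    (s.f 0 w + s.f 0 (-w) = 2 ∧ s.g 0 w + s.g 0 (-w) = 0) ∨
    (s.f 0 w + s.f 0 (-w) = 0 ∧ s.g 0 w + s.g 0 (-w) = 2) := by
  obtain ⟨σ, hσ, h1, h2⟩ := s.sigma_at hw
  have bf1 : s.f 0 w + s.f 0 (-w) ≤ 2 := bb_width_le (s.bbK 0) hw
  have bf0 : 0 ≤ s.f 0 w + s.f 0 (-w) := bb_width_nonneg (s.bbK 0) w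
  have bg1 : s.g 0 w + s.g 0 (-w) ≤ 2 := bb_width_le (s.bbW 0) hw
  have bg0 : 0 ≤ s.g 0 w + s.g 0 (-w) := bb_width_nonneg (s.bbW 0) w
  rcases hσ with rfl | rfl
  · left; constructor <;> linarith
  · right; constructor <;> linarith

/-- a ball body cannot have width 0 in one direction and width 2 in another,
if all widths are 0 or 2 -/
lemma no_mixed_width {A : Set E} (hA : IsBallBody A)
    (hall : ∀ w : E, ‖w‖ = 1 → sfn A w + sfn A (-w) = 2 ∨ sfn A w + sfn A (-w) = 0)
    {w0 w1 : E} (h0n : ‖w0‖ = 1) (h1n : ‖w1‖ = 1)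
    (h0 : sfn A w0 + sfn A (-w0) = 0) (h1 : sfn A w1 + sfn A (-w1) = 2) : False := by
  -- all difference vectors are orthogonal to w0
  have hperp : ∀ a ∈ A, ∀ b ∈ A, ⟪a - b, w0⟫ = 0 := by
    intro a ha b hb
    have l1 := le_sfn hA ha w0
    have l2 := le_sfn hA hb (-w0)
    have l3 := le_sfn hA hb w0
    have l4 := le_sfn hA ha (-w0)
    have e1 : ⟪b, -w0⟫ = -⟪b, w0⟫ := inner_neg_right _ _
    have e2 : ⟪a, -w0⟫ = -⟪a, w0⟫ := inner_neg_right _ _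
    have e3 : ⟪a - b, w0⟫ = ⟪a, w0⟫ - ⟪b, w0⟫ := inner_sub_left _ _ _
    rw [e3]
    have w0nn := bb_width_nonneg hA w0
    linarith
  -- width 2 in direction w produces a diameter pair a - b = 2 w
  have hattain : ∀ w : E, ‖w‖ = 1 → sfn A w + sfn A (-w) = 2 →
      ∃ a ∈ A, ∃ b ∈ A, a - b = (2:ℝ) • w := by
    intro w hwn hweq
    obtain ⟨a, ha, hav⟩ := sfn_attained hA w
    obtain ⟨b, hb, hbv⟩ := sfn_attained hA (-w)
    refine ⟨a, ha, b, hb, ?_⟩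
    have e1 : ⟪b, -w⟫ = -⟪b, w⟫ := inner_neg_right _ _
    have hd : ⟪a - b, w⟫ = 2 := by
      have e3 : ⟪a - b, w⟫ = ⟪a, w⟫ - ⟪b, w⟫ := inner_sub_left _ _ _
      rw [e3]; rw [hav, hbv] at hweq; linarith
    have hnorm : ‖a - b‖ ≤ 2 := by
      have := bb_diam hA ha hb; rwa [dist_eq_norm] at this
    have hz : ‖(a - b) - (2:ℝ) • w‖ ^ 2 ≤ 0 := by
      rw [norm_sub_sq_real, real_inner_smul_right, norm_smul, Real.norm_eq_abs, hwn, hd]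
      have : |(2:ℝ)| = 2 := by norm_num
      rw [this]
      nlinarith [norm_nonneg (a - b)]
    have hz2 : ‖(a - b) - (2:ℝ) • w‖ = 0 := by
      have := sq_nonneg ‖(a - b) - (2:ℝ) • w‖
      nlinarith [norm_nonneg ((a - b) - (2:ℝ) • w)]
    rw [norm_eq_zero, sub_eq_zero] at hz2
    exact hz2
  obtain ⟨a, ha, b, hb, hab⟩ := hattain w1 h1n h1
  have hw0w1 : ⟪w1, w0⟫ = 0 := by
    have := hperp a ha b hb
    rw [hab, real_inner_smul_left] at this
    linarith
  -- the mixed direction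
  have hs2 : Real.sqrt 2 * Real.sqrt 2 = 2 := Real.mul_self_sqrt (by norm_num)
  have hs2pos : 0 < Real.sqrt 2 := Real.sqrt_pos.2 (by norm_num)
  set v := (Real.sqrt 2)⁻¹ • (w0 + w1) with hv
  have hnormsq : ‖w0 + w1‖ ^ 2 = 2 := by
    rw [norm_add_sq_real, h0n, h1n]
    have : ⟪w0, w1⟫ = 0 := by rw [real_inner_comm]; exact hw0w1
    rw [this]; ring
  have hnorm12 : ‖w0 + w1‖ = Real.sqrt 2 := by
    rw [← Real.sqrt_sq (norm_nonneg (w0 + w1)), hnormsq]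
  have hvn : ‖v‖ = 1 := by
    rw [hv, norm_smul, norm_inv, Real.norm_eq_abs, abs_of_pos hs2pos, hnorm12,
      inv_mul_cancel₀ hs2pos.ne']
  -- width at v is at least √2 > 0, hence 2
  have hge : Real.sqrt 2 ≤ sfn A v + sfn A (-v) := by
    have l1 := le_sfn hA ha v
    have l2 := le_sfn hA hb (-v)
    have e1 : ⟪b, -v⟫ = -⟪b, v⟫ := inner_neg_right _ _
    have hdv : ⟪a - b, v⟫ = Real.sqrt 2 := by
      rw [hab, hv, real_inner_smul_left, real_inner_smul_right, inner_add_right]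
      have i1 : ⟪w1, w1⟫ = (1:ℝ) := by
        rw [real_inner_self_eq_norm_sq, h1n]; norm_num
      rw [hw0w1, i1]
      field_simp
      rw [Real.sq_sqrt (by norm_num)]; ring
    have e3 : ⟪a - b, v⟫ = ⟪a, v⟫ - ⟪b, v⟫ := inner_sub_left _ _ _
    rw [e3] at hdv
    linarith
  have hv2 : sfn A v + sfn A (-v) = 2 := by
    rcases hall v hvn with h | h
    · exact h
    · exfalso; rw [h] at hge; linarith
  obtain ⟨c, hc, e, he, hce⟩ := hattain v hvn hv2
  have hcontra := hperp c hc e he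
  rw [hce, real_inner_smul_left, hv, real_inner_smul_left, inner_add_left] at hcontra
  have i0 : ⟪w0, w0⟫ = (1:ℝ) := by
    rw [real_inner_self_eq_norm_sq, h0n]; norm_num
  rw [i0, hw0w1] at hcontra
  have : (Real.sqrt 2)⁻¹ > 0 := inv_pos.2 hs2pos
  nlinarith

/-- main result for positive dimension -/
lemma main_pos (s : Setup n) :
    (∃ p, s.Kb 0 = {p}) ∨ (∃ p, s.Wb 0 = {p}) := by
  by_cases hK : ∀ w : E, ‖w‖ = 1 → sfn (s.Kb 0) w + sfn (s.Kb 0) (-w) ≤ 0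
  · exact Or.inl (bb_singleton_of_width (s.bbK 0) hK)
  · push_neg at hK
    obtain ⟨w1, h1n, h1pos⟩ := hK
    have hd1 := s.width_dichotomy h1n
    have h1eq : sfn (s.Kb 0) w1 + sfn (s.Kb 0) (-w1) = 2 := by
      rcases hd1 with ⟨h, -⟩ | ⟨h, -⟩
      · exact h
      · exfalso
        have h' : sfn (s.Kb 0) w1 + sfn (s.Kb 0) (-w1) = 0 := h
        linarith
    right
    apply bb_singleton_of_width (s.bbW 0)
    intro w hwn
    rcases s.width_dichotomy hwn with ⟨-, h⟩ | ⟨hf0, -⟩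
    · have h' : sfn (s.Wb 0) w + sfn (s.Wb 0) (-w) = 0 := h
      linarith
    · exfalso
      refine no_mixed_width (s.bbK 0) (fun w' hw' => ?_) hwn h1n ?_ h1eq
      · rcases s.width_dichotomy hw' with ⟨h', -⟩ | ⟨h', -⟩
        · exact Or.inl h'
        · exact Or.inr h'
      · exact hf0

end Setup
end BBProof

theorem stmt12 {n : ℕ}
    (T : Set (EuclideanSpace ℝ (Fin n)) → Set (EuclideanSpace ℝ (Fin n)))
    (hT : ∀ K, IsBallBody K → IsBallBody (T K))
    (hiso : ∀ K L, IsBallBody K → IsBallBody L →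
      Metric.hausdorffDist (T K) (T L) = Metric.hausdorffDist K L) :
    (∃ x₀ p : EuclideanSpace ℝ (Fin n), T {x₀} = {p}) ∨
    (∃ y₀ p : EuclideanSpace ℝ (Fin n), T (Metric.closedBall y₀ 1) = {p}) := by
  rcases Nat.eq_zero_or_pos n with hn0 | hnpos
  · subst hn0
    left
    have hsub : ∀ a b : EuclideanSpace ℝ (Fin 0), a = b := by
      intro a b
      exact PiLp.ext fun i => i.elim0
    have hbb : IsBallBody ({0} : Set (EuclideanSpace ℝ (Fin 0))) := by
      refine ⟨⟨0, rfl⟩, {0}, ⟨0, rfl⟩, ?_⟩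
      have hbi : ⋂ x ∈ ({0} : Set (EuclideanSpace ℝ (Fin 0))), Metric.closedBall x 1 =
          Metric.closedBall 0 1 := by simp
      rw [hbi]
      apply Set.eq_of_subset_of_subset
      · rintro p rfl; simp
      · intro p _; exact hsub p 0
    obtain ⟨p, hp⟩ := (hT _ hbb).1
    exact ⟨0, p, Set.eq_singleton_iff_unique_mem.2 ⟨hp, fun q _ => hsub q p⟩⟩
  · rcases BBProof.Setup.main_pos ⟨T, hT, hiso, hnpos⟩ with ⟨p, hp⟩ | ⟨p, hp⟩
    · exact Or.inl ⟨0, p, hp⟩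
    · exact Or.inr ⟨0, p, hp⟩
end
end

section
/- Let Q : 𝒮ₙ → 𝒮ₙ be an isometry with respect to the Hausdorff distance such that Q({x}) = {x} for every x ∈ ℝⁿ. Then QK = K for every K ∈ 𝒮ₙ. -/
open Metric

lemma singleton_isBallBody {n : ℕ} (p : EuclideanSpace ℝ (Fin n)) :
    IsBallBody {p} := by
  refine ⟨⟨p, rfl⟩, insert p (sphere p 1), ⟨p, Set.mem_insert _ _⟩, ?_⟩
  ext y
  simp only [Set.mem_singleton_iff, Set.mem_iInter, mem_closedBall]
  constructor
  · rintro rfl x hx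
    rcases hx with rfl | hx
    · simp
    · rw [dist_comm]
      exact le_of_eq hx
  · intro h
    by_contra hy
    have hr : 0 < ‖p - y‖ := by
      rw [norm_pos_iff, sub_ne_zero]
      exact fun hh => hy hh.symm
    set x := p + ‖p - y‖⁻¹ • (p - y) with hxdef
    have hx : x ∈ insert p (sphere p 1) := by
      refine Set.mem_insert_iff.2 (Or.inr ?_)
      simp only [mem_sphere, hxdef, dist_eq_norm, add_sub_cancel_left, norm_smul,
        norm_inv, norm_norm]
      exact inv_mul_cancel₀ hr.ne'
    have hle := h x hx
    have : dist y x = ‖p - y‖ + 1 := by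
      have : x - y = (1 + ‖p - y‖⁻¹) • (p - y) := by
        rw [hxdef]; module
      rw [dist_eq_norm, ← neg_sub, norm_neg, this, norm_smul, Real.norm_eq_abs,
        abs_of_pos (by positivity)]
      field_simp
    rw [this] at hle
    linarith

lemma mem_ballBody_iff {n : ℕ} {A : Set (EuclideanSpace ℝ (Fin n))}
    (hA : IsBallBody A) (z : EuclideanSpace ℝ (Fin n)) :
    z ∈ A ↔ ∀ p, dist p z ≤ hausdorffDist A {p} := by
  obtain ⟨hne, C, ⟨c, hc⟩, hrep⟩ := hA
  have hAsub : ∀ x ∈ C, ∀ y ∈ A, dist y x ≤ 1 := by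
    intro x hx y hy
    rw [hrep] at hy
    exact Set.mem_iInter₂.1 hy x hx
  have hbd : Bornology.IsBounded A := by
    refine (isBounded_closedBall (x := c) (r := 1)).subset fun y hy => ?_
    exact hAsub c hc y hy
  constructor
  · intro hz p
    have hedist : EMetric.hausdorffEdist A {p} ≠ ⊤ :=
      hausdorffEdist_ne_top_of_nonempty_of_bounded hne ⟨p, rfl⟩ hbd Bornology.isBounded_singleton
    have := infDist_le_hausdorffDist_of_mem hz hedist
    simpa [dist_comm] using this
  · intro h
    rw [hrep]
    refine Set.mem_iInter₂.2 fun x hx => ?_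
    have hdle : hausdorffDist A {x} ≤ 1 := by
      apply hausdorffDist_le_of_mem_dist zero_le_one
      · intro y hy
        exact ⟨x, rfl, hAsub x hx y hy⟩
      · intro y hy
        obtain ⟨a, ha⟩ := hne
        refine ⟨a, ha, ?_⟩
        rw [Set.mem_singleton_iff.1 hy, dist_comm]
        exact hAsub x hx a ha
    have := (h x).trans hdle
    rwa [mem_closedBall, dist_comm]

theorem stmt14 {n : ℕ}
    (Q : Set (EuclideanSpace ℝ (Fin n)) → Set (EuclideanSpace ℝ (Fin n)))
    (hQ : ∀ K, IsBallBody K → IsBallBody (Q K))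
    (hiso : ∀ K L, IsBallBody K → IsBallBody L →
      Metric.hausdorffDist (Q K) (Q L) = Metric.hausdorffDist K L)
    (hpt : ∀ x : EuclideanSpace ℝ (Fin n), Q {x} = {x}) :
    ∀ K, IsBallBody K → Q K = K := by
  intro K hK
  ext z
  rw [mem_ballBody_iff (hQ K hK) z, mem_ballBody_iff hK z]
  have key : ∀ p, hausdorffDist (Q K) {p} = hausdorffDist K {p} := by
    intro p
    rw [← hpt p, hiso K {p} hK (singleton_isBallBody p), hpt p]
  exact forall_congr' fun p => by rw [key p]
end

section
/- Let T : 𝒮ₙ → 𝒮ₙ be an isometry for the Hausdorff distance such that T({x}) = {x} for every point x in a closed half-space H. Then for any p ∈ ℝⁿ, T({p}) is contained in the segment [p, p'], where p' is the reflection of p through the boundary hyperplane of H; in particular T({p}) is a singleton. -/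
open RealInnerProductSpace

namespace Stmt15Aux

open Metric Bornology

variable {n : ℕ}

local notation "E" => EuclideanSpace ℝ (Fin n)

lemma isBallBody_singleton (x : E) : IsBallBody {x} := by
  refine ⟨Set.singleton_nonempty x, Metric.closedBall x 1, ⟨x, by simp⟩, ?_⟩
  ext y
  simp only [Set.mem_singleton_iff, Set.mem_iInter, Metric.mem_closedBall]
  constructor
  · rintro rfl c hc
    rwa [dist_comm]
  · intro h
    by_contra hxy
    have hd : (0:ℝ) < ‖x - y‖ := by
      rw [norm_pos_iff, sub_ne_zero]
      exact fun e => hxy e.symm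
    set c := x + ‖x - y‖⁻¹ • (x - y) with hc
    have h1 : dist c x ≤ 1 := by
      rw [dist_eq_norm]
      have e : c - x = ‖x - y‖⁻¹ • (x - y) := by rw [hc]; abel
      rw [e, norm_smul, norm_inv, norm_norm, inv_mul_cancel₀ hd.ne']
    have h2 := h c h1
    have h3 : y - c = -((1 + ‖x - y‖⁻¹) • (x - y)) := by
      rw [hc]; module
    have h4 : dist y c = ‖x - y‖ + 1 := by
      rw [dist_eq_norm, h3, norm_neg, norm_smul, Real.norm_eq_abs,
        abs_of_pos (by positivity)]
      field_simp
    rw [h4] at h2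
    linarith

lemma isBallBody_closedBall (z : E) : IsBallBody (Metric.closedBall z 1) :=
  ⟨⟨z, by simp⟩, {z}, ⟨z, rfl⟩, by simp⟩

lemma ballBody_isBounded {K : Set E} (h : IsBallBody K) : IsBounded K := by
  obtain ⟨hne, C, ⟨x₀, hx₀⟩, rfl⟩ := h
  exact Metric.isBounded_closedBall.subset (Set.biInter_subset_of_mem hx₀)

lemma ballBody_isClosed {K : Set E} (h : IsBallBody K) : IsClosed K := by
  obtain ⟨hne, C, hC, rfl⟩ := h
  exact isClosed_biInter fun x _ => Metric.isClosed_closedBall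

lemma ballBody_isCompact {K : Set E} (h : IsBallBody K) : IsCompact K :=
  Metric.isCompact_of_isClosed_isBounded (ballBody_isClosed h) (ballBody_isBounded h)

lemma hd_singleton (x y : E) : Metric.hausdorffDist ({x} : Set E) {y} = dist x y := by
  apply le_antisymm
  · apply Metric.hausdorffDist_le_of_infDist dist_nonneg
    · intro z hz
      rw [Set.mem_singleton_iff] at hz; subst hz
      rw [Metric.infDist_singleton]
    · intro z hz
      rw [Set.mem_singleton_iff] at hz; subst hz
      rw [Metric.infDist_singleton, dist_comm]
  · have h := Metric.infDist_le_hausdorffDist_of_mem (Set.mem_singleton x)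
      (Metric.hausdorffEdist_ne_top_of_nonempty_of_bounded (Set.singleton_nonempty x)
        (Set.singleton_nonempty y) isBounded_singleton isBounded_singleton)
    rwa [Metric.infDist_singleton] at h

lemma dist_shift (p u : E) (hu : ‖u‖ = 1) (s t : ℝ) :
    dist (p - s • u) (p - t • u) = |s - t| := by
  rw [dist_eq_norm]
  have e : (p - s • u) - (p - t • u) = (t - s) • u := by module
  rw [e, norm_smul, hu, Real.norm_eq_abs, mul_one, abs_sub_comm]

lemma line_of_dist_le (u : E) (hu : ‖u‖ = 1) (a : ℝ) (p k : E) (hpa : a ≤ ⟪p, u⟫)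
    (hk : ∀ x : E, ⟪x, u⟫ ≤ a → dist k x ≤ dist p x) :
    k = p - ⟪p - k, u⟫ • u ∧ 0 ≤ ⟪p - k, u⟫ ∧ ⟪p - k, u⟫ ≤ 2 * (⟪p, u⟫ - a) := by
  have huu : ⟪u, u⟫ = (1:ℝ) := by
    rw [real_inner_self_eq_norm_sq, hu]; norm_num
  set v := p - k with hv
  set t := ⟪v, u⟫ with htdef
  set B := ‖p‖^2 - ‖k‖^2 with hB
  have key : ∀ x : E, ⟪x, u⟫ ≤ a → 2 * ⟪v, x⟫ ≤ B := by
    intro x hx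
    have h1 : ‖k - x‖^2 ≤ ‖p - x‖^2 := by
      have h := hk x hx
      rw [dist_eq_norm, dist_eq_norm] at h
      exact pow_le_pow_left₀ (norm_nonneg _) h 2
    rw [norm_sub_sq_real, norm_sub_sq_real] at h1
    have h2 : ⟪v, x⟫ = ⟪p, x⟫ - ⟪k, x⟫ := by rw [hv, inner_sub_left]
    rw [hB]
    linarith
  -- v = t • u
  have hveq : v = t • u := by
    set w := v - t • u with hwdef
    have hwu : ⟪w, u⟫ = 0 := by
      rw [hwdef, inner_sub_left, real_inner_smul_left, huu, htdef]; ring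
    have hvw : ⟪v, w⟫ = ‖w‖^2 := by
      have e : v = w + t • u := by rw [hwdef]; abel
      rw [e, inner_add_left, real_inner_smul_left, real_inner_self_eq_norm_sq,
        real_inner_comm w u, hwu]
      ring
    have hkey2 : ∀ s : ℝ, 2 * (s * ‖w‖^2 + a * t) ≤ B := by
      intro s
      have hx : ⟪(s • w + a • u : E), u⟫ ≤ a := by
        rw [inner_add_left, real_inner_smul_left, real_inner_smul_left, hwu, huu]
        ring_nf
        exact le_refl a
      have h := key _ hx
      have hvx : ⟪v, s • w + a • u⟫ = s * ‖w‖^2 + a * t := by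
        rw [inner_add_right, real_inner_smul_right, real_inner_smul_right, hvw, ← htdef]
      rwa [hvx] at h
    have hw0 : ‖w‖^2 ≤ 0 := by
      by_contra hpos
      push_neg at hpos
      have h := hkey2 ((B - 2*a*t + 1)/(2*‖w‖^2))
      have e : (B - 2*a*t + 1)/(2*‖w‖^2) * ‖w‖^2 = (B - 2*a*t + 1)/2 := by
        rw [div_mul_eq_mul_div, mul_div_mul_right _ _ hpos.ne']
      rw [e] at h
      linarith
    have hwz : w = 0 := by
      have h0 : ‖w‖^2 = 0 := le_antisymm hw0 (sq_nonneg _)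
      have h1 : ‖w‖ = 0 := by
        have := sq_eq_zero_iff.mp h0
        exact this
      exact norm_eq_zero.mp h1
    have := sub_eq_zero.mp (hwdef ▸ hwz)
    exact this
  have ht0 : 0 ≤ t := by
    by_contra hneg
    push_neg at hneg
    set s := max 0 ((B - 2*a*t + 1)/(-(2*t))) with hs
    have hs0 : (0:ℝ) ≤ s := le_max_left _ _
    have hx : ⟪((a - s) • u : E), u⟫ ≤ a := by
      rw [real_inner_smul_left, huu]
      nlinarith
    have hkey := key _ hx
    have hvx : ⟪v, (a - s) • u⟫ = (a - s) * t := by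
      rw [real_inner_smul_right, ← htdef]
    rw [hvx] at hkey
    have h2t : (0:ℝ) < -(2*t) := by linarith
    have hge : (B - 2*a*t + 1)/(-(2*t)) ≤ s := le_max_right _ _
    have h3 := (div_le_iff₀ h2t).mp hge
    nlinarith
  have hkeq : k = p - t • u := by
    calc k = p - (p - k) := by abel
    _ = p - t • u := by rw [← hv, hveq]
  have hk2 : ‖k‖^2 = ‖p‖^2 - 2*(t*⟪p,u⟫) + t^2 := by
    rw [hkeq, norm_sub_sq_real, real_inner_smul_right, norm_smul, Real.norm_eq_abs, hu,
      mul_one, sq_abs, real_inner_comm]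
  have hxa : ⟪(a • u : E), u⟫ ≤ a := by
    rw [real_inner_smul_left, huu]; linarith
  have h3 := key _ hxa
  have hvx : ⟪v, a • u⟫ = a * t := by rw [real_inner_smul_right, ← htdef]
  rw [hvx, hB, hk2] at h3
  have htc : t ≤ 2 * (⟪p,u⟫ - a) := by
    rcases eq_or_lt_of_le ht0 with h | h
    · rw [← h]; linarith
    · nlinarith
  exact ⟨hkeq, ht0, htc⟩
set_option maxHeartbeats 1000000 in
lemma Tp_eq (T : Set (EuclideanSpace ℝ (Fin n)) → Set (EuclideanSpace ℝ (Fin n)))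
    (hT : ∀ K, IsBallBody K → IsBallBody (T K))
    (hiso : ∀ K L, IsBallBody K → IsBallBody L →
      Metric.hausdorffDist (T K) (T L) = Metric.hausdorffDist K L)
    (u : EuclideanSpace ℝ (Fin n)) (hu : ‖u‖ = 1) (a : ℝ)
    (hfix : ∀ x : EuclideanSpace ℝ (Fin n), ⟪x, u⟫ ≤ a → T {x} = {x})
    (p : EuclideanSpace ℝ (Fin n)) : T {p} = {p} := by
  by_cases hpa : ⟪p, u⟫ ≤ a
  · exact hfix p hpa
  push_neg at hpa
  have huu : ⟪u, u⟫ = (1:ℝ) := by rw [real_inner_self_eq_norm_sq, hu]; norm_num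
  set K := T {p} with hKdef
  have hKbb : IsBallBody K := hT _ (isBallBody_singleton p)
  have hKne : K.Nonempty := hKbb.1
  have hKcp : IsCompact K := ballBody_isCompact hKbb
  have hKbd : IsBounded K := ballBody_isBounded hKbb
  have hKet : ∀ x : E, EMetric.hausdorffEdist K ({x} : Set E) ≠ ⊤ := fun x =>
    Metric.hausdorffEdist_ne_top_of_nonempty_of_bounded hKne (Set.singleton_nonempty x)
      hKbd isBounded_singleton
  have hKd : ∀ x : E, ⟪x, u⟫ ≤ a → Metric.hausdorffDist K {x} = dist p x := by
    intro x hx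
    have h := hiso {p} {x} (isBallBody_singleton p) (isBallBody_singleton x)
    rw [hfix x hx, ← hKdef, hd_singleton] at h
    exact h
  have hline : ∀ k ∈ K, k = p - ⟪p - k, u⟫ • u ∧ 0 ≤ ⟪p - k, u⟫ ∧
      ⟪p - k, u⟫ ≤ 2 * (⟪p, u⟫ - a) := by
    intro k hk
    apply line_of_dist_le u hu a p k hpa.le
    intro x hx
    have h1 := Metric.infDist_le_hausdorffDist_of_mem hk (hKet x)
    rwa [Metric.infDist_singleton, hKd x hx] at h1
  set r : ℝ := ⟪p, u⟫ - a + 1 with hr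
  have hr1 : 1 < r := by rw [hr]; linarith
  -- p ∈ K
  have hcont : Continuous fun k : E => ⟪p - k, u⟫ := by
    exact Continuous.inner (continuous_const.sub continuous_id) continuous_const
  obtain ⟨k₀, hk₀K, hk₀min⟩ := hKcp.exists_isMinOn hKne hcont.continuousOn
  rw [isMinOn_iff] at hk₀min
  obtain ⟨hk₀e, ht₁0, ht₁c⟩ := hline k₀ hk₀K
  set t₁ : ℝ := ⟪p - k₀, u⟫ with ht₁
  set xs : E := p - (2*r) • u with hxs
  have hxsH : ⟪xs, u⟫ ≤ a := by
    rw [hxs, inner_sub_left, real_inner_smul_left, huu, hr]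
    linarith
  have hdpxs : dist p xs = 2*r := by
    rw [hxs, dist_eq_norm, sub_sub_cancel, norm_smul, hu, Real.norm_eq_abs, mul_one,
      abs_of_pos (by linarith)]
  have h1 : Metric.hausdorffDist K {xs} = 2*r := by rw [hKd xs hxsH, hdpxs]
  have hdk : ∀ k ∈ K, dist k xs = 2*r - ⟪p - k, u⟫ := by
    intro k hk
    obtain ⟨hke, h0, hc⟩ := hline k hk
    have e : dist k xs = |⟪p - k, u⟫ - 2*r| := by
      conv_lhs => rw [hke, hxs]
      exact dist_shift p u hu _ _
    rw [e, abs_of_nonpos (by linarith)]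
    ring
  have h2 : Metric.hausdorffDist K {xs} ≤ 2*r - t₁ := by
    apply Metric.hausdorffDist_le_of_infDist (by linarith)
    · intro k hk
      rw [Metric.infDist_singleton, hdk k hk]
      have := hk₀min k hk
      linarith
    · intro y hy
      rw [Set.mem_singleton_iff] at hy; subst hy
      have e1 : Metric.infDist xs K ≤ dist xs k₀ := Metric.infDist_le_dist_of_mem hk₀K
      have e2 : dist k₀ xs = 2*r - t₁ := by rw [hdk k₀ hk₀K, ht₁]
      rw [dist_comm] at e1
      linarith
  have ht₁z : t₁ = 0 := by rw [h1] at h2; linarith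
  have hpK : p ∈ K := by
    have e : k₀ = p := by rw [hk₀e, ht₁z]; simp
    rwa [e] at hk₀K
  -- the ball L and its image J
  set z : E := p - r • u with hz
  have hzu : ⟪z, u⟫ = a - 1 := by
    rw [hz, inner_sub_left, real_inner_smul_left, huu, hr]; ring
  set L : Set E := Metric.closedBall z 1 with hL
  have hLbb : IsBallBody L := isBallBody_closedBall z
  set J := T L with hJdef
  have hJbb : IsBallBody J := hT L hLbb
  have hJne : J.Nonempty := hJbb.1
  have hJcp : IsCompact J := ballBody_isCompact hJbb
  have hJbd : IsBounded J := ballBody_isBounded hJbb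
  have hLne : L.Nonempty := ⟨z, by simp [hL]⟩
  have hLbd : IsBounded L := Metric.isBounded_closedBall
  have hJet : ∀ x : E, EMetric.hausdorffEdist J ({x} : Set E) ≠ ⊤ := fun x =>
    Metric.hausdorffEdist_ne_top_of_nonempty_of_bounded hJne (Set.singleton_nonempty x)
      hJbd isBounded_singleton
  have hJd : ∀ x : E, ⟪x, u⟫ ≤ a → Metric.hausdorffDist J {x} = Metric.hausdorffDist L {x} := by
    intro x hx
    have h := hiso L {x} hLbb (isBallBody_singleton x)
    rwa [hfix x hx, ← hJdef] at h
  have hJL : ∀ j ∈ J, dist j z ≤ 1 := by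
    intro j hj
    have h1 : Metric.hausdorffDist L ({z} : Set E) ≤ 1 := by
      apply Metric.hausdorffDist_le_of_infDist zero_le_one
      · intro y hy
        rw [Metric.infDist_singleton]
        exact Metric.mem_closedBall.mp hy
      · intro y hy
        rw [Set.mem_singleton_iff] at hy; subst hy
        refine le_trans (Metric.infDist_le_dist_of_mem (Metric.mem_closedBall_self zero_le_one)) ?_
        simp
    have h2 := Metric.infDist_le_hausdorffDist_of_mem hj (hJet z)
    rw [Metric.infDist_singleton, hJd z (by rw [hzu]; linarith)] at h2
    linarith
  -- z + u ∈ J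
  have hzuJ : z + u ∈ J := by
    set x' : E := z - u with hx'
    have hx'H : ⟪x', u⟫ ≤ a := by
      rw [hx', inner_sub_left, hzu, huu]; linarith
    have hdzx' : dist z x' = 1 := by
      rw [hx', dist_eq_norm, sub_sub_cancel, hu]
    have hLx' : Metric.hausdorffDist L ({x'} : Set E) = 2 := by
      apply le_antisymm
      · apply Metric.hausdorffDist_le_of_infDist (by norm_num)
        · intro y hy
          rw [Metric.infDist_singleton]
          calc dist y x' ≤ dist y z + dist z x' := dist_triangle _ _ _
          _ ≤ 2 := by
              have := Metric.mem_closedBall.mp hy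
              rw [hdzx']; linarith
        · intro y hy
          rw [Set.mem_singleton_iff] at hy; subst hy
          refine le_trans (Metric.infDist_le_dist_of_mem
            (Metric.mem_closedBall_self zero_le_one)) ?_
          rw [dist_comm, hdzx']; norm_num
      · have hmem : z + u ∈ L := by
          rw [hL, Metric.mem_closedBall, dist_eq_norm, add_sub_cancel_left, hu]
        have h := Metric.infDist_le_hausdorffDist_of_mem hmem
          (Metric.hausdorffEdist_ne_top_of_nonempty_of_bounded hLne (Set.singleton_nonempty x')
            hLbd isBounded_singleton)
        rw [Metric.infDist_singleton] at h
        have hd : dist (z + u) x' = 2 := by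
          rw [hx', dist_eq_norm]
          have e : z + u - (z - u) = (2:ℝ) • u := by module
          rw [e, norm_smul, hu, Real.norm_eq_abs]; norm_num
        linarith
    have hJx' : Metric.hausdorffDist J ({x'} : Set E) = 2 := by rw [hJd x' hx'H, hLx']
    obtain ⟨j₂, hj₂J, hj₂max⟩ := hJcp.exists_isMaxOn hJne
      ((continuous_id.dist continuous_const : Continuous fun y : E => dist y x').continuousOn)
    rw [isMaxOn_iff] at hj₂max
    have hle : Metric.hausdorffDist J ({x'} : Set E) ≤ dist j₂ x' := by
      apply Metric.hausdorffDist_le_of_infDist dist_nonneg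
      · intro y hy
        rw [Metric.infDist_singleton]
        exact hj₂max y hy
      · intro y hy
        rw [Set.mem_singleton_iff] at hy; subst hy
        refine le_trans (Metric.infDist_le_dist_of_mem hj₂J) ?_
        rw [dist_comm]
    have h2le : 2 ≤ dist j₂ x' := by rw [← hJx']; exact hle
    have hjz : ‖j₂ - z‖ ≤ 1 := by
      rw [← dist_eq_norm]; exact hJL j₂ hj₂J
    have e1 : ‖j₂ - x'‖^2 ≤ 4 → True := fun _ => trivial
    have e2 : j₂ - x' = (j₂ - z) + u := by rw [hx']; abel
    have e3 : ‖j₂ - x'‖^2 = ‖j₂ - z‖^2 + 2*⟪j₂ - z, u⟫ + 1 := by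
      rw [e2, norm_add_sq_real, hu]; ring
    have e4 : ⟪j₂ - z, u⟫ ≤ ‖j₂ - z‖ := by
      have := real_inner_le_norm (j₂ - z) u
      rwa [hu, mul_one] at this
    have e5 : ‖j₂ - x'‖^2 ≥ 4 := by
      rw [← dist_eq_norm]; nlinarith [dist_nonneg (x := j₂) (y := x')]
    have hb2 : ‖j₂ - z‖^2 ≤ 1 := by nlinarith [norm_nonneg (j₂ - z)]
    have hθ1 : ⟪j₂ - z, u⟫ = 1 := by linarith
    have hb1 : ‖j₂ - z‖^2 = 1 := by linarith
    have e6 : ‖j₂ - (z + u)‖^2 = 0 := by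
      have e7 : j₂ - (z + u) = (j₂ - z) - u := by abel
      rw [e7, norm_sub_sq_real, hu, hθ1, hb1]; ring
    have e8 : j₂ = z + u := by
      have h9 : ‖j₂ - (z + u)‖ = 0 := by
        have := sq_eq_zero_iff.mp e6
        exact this
      rw [← sub_eq_zero]
      exact norm_eq_zero.mp h9
    rwa [← e8]
  -- hausdorffDist J K = r + 1
  have hdzp : dist z p = r := by
    rw [hz, dist_eq_norm]
    have e : p - r • u - p = -(r • u) := by abel
    rw [e, norm_neg, norm_smul, hu, Real.norm_eq_abs, mul_one, abs_of_pos (by linarith)]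
  have hzmuL : z - u ∈ L := by
    rw [hL, Metric.mem_closedBall, dist_eq_norm]
    have e : z - u - z = -u := by abel
    rw [e, norm_neg, hu]
  have hdzmup : dist (z - u) p = r + 1 := by
    rw [dist_eq_norm]
    have e : z - u - p = -((r+1) • u) := by rw [hz]; module
    rw [e, norm_neg, norm_smul, hu, Real.norm_eq_abs, mul_one, abs_of_pos (by linarith)]
  have hJK : Metric.hausdorffDist J K = r + 1 := by
    have h := hiso L {p} hLbb (isBallBody_singleton p)
    rw [← hJdef, ← hKdef] at h
    have hLp : Metric.hausdorffDist L ({p} : Set E) = r + 1 := by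
      apply le_antisymm
      · apply Metric.hausdorffDist_le_of_infDist (by linarith)
        · intro y hy
          rw [Metric.infDist_singleton]
          calc dist y p ≤ dist y z + dist z p := dist_triangle _ _ _
          _ ≤ r + 1 := by
              have := Metric.mem_closedBall.mp hy
              rw [hdzp]; linarith
        · intro y hy
          rw [Set.mem_singleton_iff] at hy; subst hy
          refine le_trans (Metric.infDist_le_dist_of_mem
            (Metric.mem_closedBall_self zero_le_one)) ?_
          rw [dist_comm, hdzp]; linarith
      · have h2 := Metric.infDist_le_hausdorffDist_of_mem hzmuL
          (Metric.hausdorffEdist_ne_top_of_nonempty_of_bounded hLne (Set.singleton_nonempty p)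
            hLbd isBounded_singleton)
        rw [Metric.infDist_singleton, hdzmup] at h2
        exact h2
    rw [h, hLp]
  -- extract the extreme point of J
  obtain ⟨j₃, hj₃J, hj₃max⟩ := hJcp.exists_isMaxOn hJne
    ((Metric.continuous_infDist_pt K).continuousOn)
  rw [isMaxOn_iff] at hj₃max
  have hub2 : ∀ k ∈ K, Metric.infDist k J ≤ r - 1 := by
    intro k hk
    obtain ⟨hke, h0, hc⟩ := hline k hk
    refine le_trans (Metric.infDist_le_dist_of_mem hzuJ) ?_
    have e : z + u = p - (r - 1) • u := by rw [hz]; module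
    have e2 : dist k (z + u) = |⟪p - k, u⟫ - (r - 1)| := by
      conv_lhs => rw [hke, e]
      exact dist_shift p u hu _ _
    rw [e2, abs_le]
    constructor <;> linarith
  have hmax3 : r + 1 ≤ Metric.infDist j₃ K := by
    have hle : Metric.hausdorffDist J K ≤ max (Metric.infDist j₃ K) (r - 1) := by
      apply Metric.hausdorffDist_le_of_infDist (le_max_of_le_right (by linarith))
      · intro j hj
        exact le_trans (hj₃max j hj) (le_max_left _ _)
      · intro k hk
        exact le_trans (hub2 k hk) (le_max_right _ _)
    rw [hJK] at hle
    rcases le_max_iff.mp hle with h | h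
    · exact h
    · linarith
  have hd3 : Metric.infDist j₃ K ≤ dist j₃ p := Metric.infDist_le_dist_of_mem hpK
  have hjz3 : dist j₃ z ≤ 1 := hJL j₃ hj₃J
  have htri : dist j₃ p ≤ dist j₃ z + dist z p := dist_triangle _ _ _
  have hdjp : dist j₃ p = r + 1 := by rw [hdzp] at htri; apply le_antisymm <;> linarith
  have hdjz : dist j₃ z = 1 := by rw [hdzp] at htri; apply le_antisymm <;> linarith
  -- rigidity: j₃ = z - u
  have e4 : ‖j₃ - z‖^2 = 1 := by rw [← dist_eq_norm, hdjz]; norm_num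
  have e2 : j₃ - p = (j₃ - z) - r • u := by rw [hz]; module
  have e1 : ‖j₃ - p‖^2 = (r+1)^2 := by rw [← dist_eq_norm, hdjp]
  rw [e2, norm_sub_sq_real, real_inner_smul_right, norm_smul, Real.norm_eq_abs, hu,
    mul_one, sq_abs, e4] at e1
  have hθ3 : ⟪j₃ - z, u⟫ = -1 := by
    have hre : r * ⟪j₃ - z, u⟫ = r * (-1) := by nlinarith
    exact mul_left_cancel₀ (by linarith) hre
  have hj₃e : j₃ = z - u := by
    have e5 : ‖j₃ - (z - u)‖^2 = 0 := by
      have e6 : j₃ - (z - u) = (j₃ - z) + u := by abel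
      rw [e6, norm_add_sq_real, hu, hθ3, e4]; ring
    have h9 : ‖j₃ - (z - u)‖ = 0 := sq_eq_zero_iff.mp e5
    rw [← sub_eq_zero]
    exact norm_eq_zero.mp h9
  -- conclude K = {p}
  apply Set.eq_singleton_iff_unique_mem.mpr
  refine ⟨hpK, ?_⟩
  intro k hk
  obtain ⟨hke, h0, hc⟩ := hline k hk
  have hge : r + 1 ≤ dist j₃ k := le_trans hmax3 (Metric.infDist_le_dist_of_mem hk)
  have e7 : z - u = p - (r+1) • u := by rw [hz]; module
  have e8 : dist j₃ k = |(r+1) - ⟪p - k, u⟫| := by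
    conv_lhs => rw [hj₃e, e7, hke]
    exact dist_shift p u hu _ _
  rw [e8] at hge
  have htz : ⟪p - k, u⟫ = 0 := by
    rcases abs_cases ((r+1) - ⟪p - k, u⟫) with ⟨he, _⟩ | ⟨he, _⟩ <;> rw [he] at hge <;> linarith
  rw [hke, htz]
  simp




end Stmt15Aux

theorem stmt15 {n : ℕ}
    (T : Set (EuclideanSpace ℝ (Fin n)) → Set (EuclideanSpace ℝ (Fin n)))
    (hT : ∀ K, IsBallBody K → IsBallBody (T K))
    (hiso : ∀ K L, IsBallBody K → IsBallBody L →
      Metric.hausdorffDist (T K) (T L) = Metric.hausdorffDist K L)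
    (u : EuclideanSpace ℝ (Fin n)) (hu : ‖u‖ = 1) (a : ℝ)
    (hfix : ∀ x : EuclideanSpace ℝ (Fin n), ⟪x, u⟫ ≤ a → T {x} = {x})
    (p : EuclideanSpace ℝ (Fin n)) :
    T {p} ⊆ segment ℝ p (p - (2 * (⟪p, u⟫ - a)) • u) ∧
    ∃ q : EuclideanSpace ℝ (Fin n), T {p} = {q} := by
  have h := Stmt15Aux.Tp_eq T hT hiso u hu a hfix p
  rw [h]
  exact ⟨Set.singleton_subset_iff.mpr (left_mem_segment ℝ _ _), p, rfl⟩
end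

section
/- Let T : 𝒮ₙ → 𝒮ₙ be an isometry for the Hausdorff metric, and let K₀ ∈ 𝒮ₙ be such that T(K₀) is a singleton. Then the set M = {x ∈ ℝⁿ : T(K₀ + x) is not a singleton} is convex. -/
open Pointwise

open Metric Bornology

lemma isBallBody_vadd {n : ℕ} {K : Set (EuclideanSpace ℝ (Fin n))}
    (h : IsBallBody K) (x : EuclideanSpace ℝ (Fin n)) : IsBallBody (x +ᵥ K) := by
  obtain ⟨⟨k, hk⟩, C, hCne, rfl⟩ := h
  refine ⟨⟨x +ᵥ k, ⟨k, hk, rfl⟩⟩, x +ᵥ C, hCne.image _, ?_⟩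
  ext p
  simp only [Set.mem_vadd_set, Set.mem_iInter, mem_closedBall]
  constructor
  · rintro ⟨q, hq, rfl⟩ c ⟨c₀, hc₀, rfl⟩
    have := hq c₀ hc₀
    simpa [dist_eq_norm, vadd_eq_add, add_sub_add_left_eq_sub] using this
  · intro hp
    refine ⟨-x + p, fun c hc => ?_, by simp [vadd_eq_add]⟩
    have := hp (x +ᵥ c) ⟨c, hc, rfl⟩
    simpa [dist_eq_norm, vadd_eq_add, sub_eq_add_neg, add_comm, add_assoc, add_left_comm]
      using this

lemma isBallBody_isCompact {n : ℕ} {K : Set (EuclideanSpace ℝ (Fin n))}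
    (h : IsBallBody K) : IsCompact K := by
  obtain ⟨-, C, ⟨c, hc⟩, rfl⟩ := h
  refine IsCompact.of_isClosed_subset (isCompact_closedBall c 1) ?_ ?_
  · exact isClosed_biInter fun x _ => isClosed_closedBall
  · exact Set.biInter_subset_of_mem hc

lemma isBallBody_isBounded {n : ℕ} {K : Set (EuclideanSpace ℝ (Fin n))}
    (h : IsBallBody K) : IsBounded K := (isBallBody_isCompact h).isBounded

lemma hd_vadd_le {n : ℕ} (K : Set (EuclideanSpace ℝ (Fin n)))
    (x y : EuclideanSpace ℝ (Fin n)) :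
    hausdorffDist (x +ᵥ K) (y +ᵥ K) ≤ dist x y := by
  apply hausdorffDist_le_of_mem_dist dist_nonneg
  · rintro p ⟨k, hk, rfl⟩
    exact ⟨y +ᵥ k, ⟨k, hk, rfl⟩, by
      simpa [vadd_eq_add] using (dist_add_right x y k).le⟩
  · rintro p ⟨k, hk, rfl⟩
    exact ⟨x +ᵥ k, ⟨k, hk, rfl⟩, by
      simpa [vadd_eq_add, dist_comm] using (dist_add_right x y k).le⟩

lemma le_infDist' {α : Type*} [PseudoMetricSpace α] {s : Set α} (hs : s.Nonempty)
    {x : α} {b : ℝ} (h : ∀ y ∈ s, b ≤ dist x y) : b ≤ infDist x s := by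
  by_contra hlt
  push_neg at hlt
  obtain ⟨y, hy, hdy⟩ := (infDist_lt_iff hs).1 hlt
  exact absurd (h y hy) (not_le.2 hdy)

lemma hd_vadd_ge {n : ℕ} (K : Set (EuclideanSpace ℝ (Fin n)))
    (hK : IsCompact K) (hne : K.Nonempty) (x y : EuclideanSpace ℝ (Fin n)) :
    dist x y ≤ hausdorffDist (x +ᵥ K) (y +ᵥ K) := by
  rcases eq_or_ne x y with rfl | hxy
  · simpa using hausdorffDist_nonneg
  set w := x - y with hw
  have hwne : w ≠ 0 := sub_ne_zero.2 hxy
  have hwpos : 0 < ‖w‖ := norm_pos_iff.2 hwne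
  obtain ⟨k₀, hk₀, hmax⟩ := hK.exists_isMaxOn hne
    ((continuous_id.inner continuous_const).continuousOn :
      ContinuousOn (fun k : EuclideanSpace ℝ (Fin n) => (inner ℝ k w : ℝ)) K)
  have key : ∀ p ∈ y +ᵥ K, dist x y ≤ dist (x +ᵥ k₀) p := by
    rintro p ⟨k, hk, rfl⟩
    have h1 : ‖w‖ ^ 2 ≤ (inner ℝ ((x +ᵥ k₀) - (y +ᵥ k)) w : ℝ) := by
      have hdiff : (x +ᵥ k₀) - (y +ᵥ k) = w + (k₀ - k) := by
        simp only [vadd_eq_add, hw]; abel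
      have hww : (inner ℝ w w : ℝ) = ‖w‖ ^ 2 := real_inner_self_eq_norm_sq w
      have hk' : (inner ℝ (k₀ - k) w : ℝ) = inner ℝ k₀ w - inner ℝ k w := inner_sub_left _ _ _
      have hmax' := hmax hk
      simp only [Set.mem_setOf_eq, id] at hmax'
      rw [hdiff, inner_add_left]
      linarith
    have h2 : (inner ℝ ((x +ᵥ k₀) - (y +ᵥ k)) w : ℝ) ≤ ‖(x +ᵥ k₀) - (y +ᵥ k)‖ * ‖w‖ :=
      real_inner_le_norm _ _
    have h3 : ‖w‖ ≤ ‖(x +ᵥ k₀) - (y +ᵥ k)‖ := by nlinarith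
    calc dist x y = ‖w‖ := by rw [dist_eq_norm, hw]
      _ ≤ ‖(x +ᵥ k₀) - (y +ᵥ k)‖ := h3
      _ = dist (x +ᵥ k₀) (y +ᵥ k) := (dist_eq_norm _ _).symm
  have hfin : EMetric.hausdorffEdist (x +ᵥ K) (y +ᵥ K) ≠ ⊤ := by
    apply hausdorffEdist_ne_top_of_nonempty_of_bounded
    · exact ⟨x +ᵥ k₀, ⟨k₀, hk₀, rfl⟩⟩
    · obtain ⟨k, hk⟩ := hne; exact ⟨y +ᵥ k, ⟨k, hk, rfl⟩⟩
    · rw [← Set.image_vadd]; exact (hK.image (continuous_const_vadd x)).isBounded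
    · rw [← Set.image_vadd]; exact (hK.image (continuous_const_vadd y)).isBounded
  calc dist x y ≤ infDist (x +ᵥ k₀) (y +ᵥ K) := by
        apply le_infDist' _ key
        obtain ⟨k, hk⟩ := hne; exact ⟨y +ᵥ k, ⟨k, hk, rfl⟩⟩
    _ ≤ hausdorffDist (x +ᵥ K) (y +ᵥ K) :=
        infDist_le_hausdorffDist_of_mem ⟨k₀, hk₀, rfl⟩ hfin

lemma strict_tri {E : Type*} [NormedAddCommGroup E] [NormedSpace ℝ E]
    [StrictConvexSpace ℝ E] {A B : ℝ} (hA : 0 < A) (hB : 0 < B) {u v q : E}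
    (hu : dist u q ≤ A) (hv : dist v q ≤ B)
    (hne : v ≠ u + ((A + B) / A) • (q - u)) : dist u v < A + B := by
  have hle : dist u v ≤ A + B := by
    calc dist u v ≤ dist u q + dist q v := dist_triangle u q v
      _ ≤ A + B := add_le_add hu (by rwa [dist_comm])
  rcases hle.lt_or_eq with h | h
  · exact h
  exfalso
  have hqv : dist q v ≤ B := by rwa [dist_comm]
  have h1 : dist u q + dist q v = dist u v := by
    have := dist_triangle u q v
    linarith
  have huqA : dist u q = A := by linarith
  have hqvB : dist q v = B := by linarith
  have hw : Wbtw ℝ u q v := dist_add_dist_eq_iff.1 h1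
  obtain ⟨t, ⟨ht0, ht1⟩, hq⟩ := hw
  have hqeq : q = u + t • (v - u) := by
    rw [← hq, AffineMap.lineMap_apply_module]
    module
  have hdist : dist u q = t * dist u v := by
    rw [hqeq, dist_eq_norm, dist_eq_norm]
    rw [show u - (u + t • (v - u)) = t • (u - v) by module]
    rw [norm_smul, Real.norm_eq_abs, abs_of_nonneg ht0, norm_sub_rev]
  have htval : t = A / (A + B) := by
    rw [h, huqA] at hdist
    field_simp
    linarith
  have htpos : 0 < t := by rw [htval]; positivity
  apply hne
  have : q - u = t • (v - u) := by rw [hqeq]; abel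
  have hvu : v - u = t⁻¹ • (q - u) := by
    rw [this, smul_smul, inv_mul_cancel₀ htpos.ne', one_smul]
  have htinv : t⁻¹ = (A + B) / A := by
    rw [htval, inv_div]
  rw [← htinv, ← hvu]
  abel

lemma two_points_of_not_singleton {α : Type*} {s : Set α} (hne : s.Nonempty)
    (h : ¬ ∃ p, s = {p}) : ∃ u ∈ s, ∃ v ∈ s, u ≠ v := by
  obtain ⟨u, hu⟩ := hne
  by_contra hc
  push_neg at hc
  apply h
  refine ⟨u, Set.eq_singleton_iff_unique_mem.2 ⟨hu, fun v hv => ?_⟩⟩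
  by_contra hvu
  exact hvu (hc u hu v hv).symm |>.elim

theorem stmt17 {n : ℕ}
    (T : Set (EuclideanSpace ℝ (Fin n)) → Set (EuclideanSpace ℝ (Fin n)))
    (hT : ∀ K, IsBallBody K → IsBallBody (T K))
    (hiso : ∀ K L, IsBallBody K → IsBallBody L →
      Metric.hausdorffDist (T K) (T L) = Metric.hausdorffDist K L)
    (K₀ : Set (EuclideanSpace ℝ (Fin n))) (hK₀ : IsBallBody K₀)
    (hsing : ∃ p, T K₀ = {p}) :
    Convex ℝ {x : EuclideanSpace ℝ (Fin n) | ¬ ∃ p, T (x +ᵥ K₀) = {p}} := by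
  intro x hx y hy a b ha hb hab
  simp only [Set.mem_setOf_eq] at hx hy ⊢
  rintro ⟨q, hq⟩
  rcases eq_or_lt_of_le ha with ha0 | ha'
  · rw [← ha0, zero_smul, zero_add, show b = 1 by linarith, one_smul] at hq
    exact hy ⟨q, hq⟩
  rcases eq_or_lt_of_le hb with hb0 | hb'
  · rw [← hb0, zero_smul, add_zero, show a = 1 by linarith, one_smul] at hq
    exact hx ⟨q, hq⟩
  rcases eq_or_ne x y with rfl | hxy
  · rw [← add_smul, hab, one_smul] at hq
    exact hx ⟨q, hq⟩
  set z := a • x + b • y with hz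
  -- basic facts
  have hKx := isBallBody_vadd hK₀ x
  have hKy := isBallBody_vadd hK₀ y
  have hKz := isBallBody_vadd hK₀ z
  have hLx := hT _ hKx
  have hLy := hT _ hKy
  have hLz := hT _ hKz
  have hLxc := isBallBody_isCompact hLx
  have hLyc := isBallBody_isCompact hLy
  -- distances
  have hr : (0:ℝ) < dist x y := dist_pos.2 hxy
  have hxz : x - z = b • (x - y) := by
    rw [hz, show b = 1 - a by linarith]; module
  have hzy : z - y = a • (x - y) := by
    rw [hz, show a = 1 - b by linarith]; module
  have hdxz : dist x z = b * dist x y := by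
    rw [dist_eq_norm, hxz, norm_smul, Real.norm_eq_abs, abs_of_pos hb', dist_eq_norm]
  have hdzy : dist z y = a * dist x y := by
    rw [dist_eq_norm, hzy, norm_smul, Real.norm_eq_abs, abs_of_pos ha', dist_eq_norm]
  have hsum : dist x z + dist z y = dist x y := by
    rw [hdxz, hdzy]; nlinarith
  set A := hausdorffDist (T (x +ᵥ K₀)) (T (z +ᵥ K₀)) with hA
  set B := hausdorffDist (T (z +ᵥ K₀)) (T (y +ᵥ K₀)) with hB
  set D := hausdorffDist (T (x +ᵥ K₀)) (T (y +ᵥ K₀)) with hD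
  have hA_le : A ≤ dist x z := by
    rw [hA, hiso _ _ hKx hKz]; exact hd_vadd_le K₀ x z
  have hB_le : B ≤ dist z y := by
    rw [hB, hiso _ _ hKz hKy]; exact hd_vadd_le K₀ z y
  have hD_ge : dist x y ≤ D := by
    rw [hD, hiso _ _ hKx hKy]
    exact hd_vadd_ge K₀ (isBallBody_isCompact hK₀) hK₀.1 x y
  have finLxLz : EMetric.hausdorffEdist (T (x +ᵥ K₀)) (T (z +ᵥ K₀)) ≠ ⊤ :=
    hausdorffEdist_ne_top_of_nonempty_of_bounded hLx.1 hLz.1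
      (isBallBody_isBounded hLx) (isBallBody_isBounded hLz)
  have finLzLy : EMetric.hausdorffEdist (T (z +ᵥ K₀)) (T (y +ᵥ K₀)) ≠ ⊤ :=
    hausdorffEdist_ne_top_of_nonempty_of_bounded hLz.1 hLy.1
      (isBallBody_isBounded hLz) (isBallBody_isBounded hLy)
  have htri : D ≤ A + B := hausdorffDist_triangle finLxLz
  have hAeq : A = dist x z := by linarith
  have hBeq : B = dist z y := by linarith
  have hABD : A + B = D := by linarith
  have hApos : 0 < A := by rw [hAeq, hdxz]; positivity
  have hBpos : 0 < B := by rw [hBeq, hdzy]; positivity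
  -- pointwise bounds
  have hboundx : ∀ u ∈ T (x +ᵥ K₀), dist u q ≤ A := by
    intro u hu
    calc dist u q = infDist u (T (z +ᵥ K₀)) := by rw [hq, infDist_singleton]
      _ ≤ A := infDist_le_hausdorffDist_of_mem hu finLxLz
  have hboundy : ∀ v ∈ T (y +ᵥ K₀), dist v q ≤ B := by
    intro v hv
    calc dist v q = infDist v (T (z +ᵥ K₀)) := by rw [hq, infDist_singleton]
      _ ≤ hausdorffDist (T (y +ᵥ K₀)) (T (z +ᵥ K₀)) := infDist_le_hausdorffDist_of_mem hv
          (by rw [Metric.hausdorffEDist_comm]; exact finLzLy)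
      _ = B := hausdorffDist_comm
  -- two points each
  obtain ⟨u₁, hu₁, u₂, hu₂, hu12⟩ := two_points_of_not_singleton hLx.1 hx
  obtain ⟨v₁, hv₁, v₂, hv₂, hv12⟩ := two_points_of_not_singleton hLy.1 hy
  -- maximizers
  obtain ⟨us, hus, hmaxu⟩ := hLxc.exists_isMaxOn hLx.1
    (continuous_infDist_pt (T (y +ᵥ K₀))).continuousOn
  obtain ⟨vs, hvs, hmaxv⟩ := hLyc.exists_isMaxOn hLy.1
    (continuous_infDist_pt (T (x +ᵥ K₀))).continuousOn
  have h1 : infDist us (T (y +ᵥ K₀)) < A + B := by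
    obtain ⟨v', hv', hvbad⟩ :
        ∃ v' ∈ T (y +ᵥ K₀), v' ≠ us + ((A + B) / A) • (q - us) := by
      rcases eq_or_ne v₁ (us + ((A + B) / A) • (q - us)) with h | h
      · exact ⟨v₂, hv₂, by rw [← h]; exact hv12.symm⟩
      · exact ⟨v₁, hv₁, h⟩
    calc infDist us (T (y +ᵥ K₀)) ≤ dist us v' := infDist_le_dist_of_mem hv'
      _ < A + B := strict_tri hApos hBpos (hboundx us hus) (hboundy v' hv') hvbad
  have h2 : infDist vs (T (x +ᵥ K₀)) < A + B := by
    obtain ⟨u', hu', hubad⟩ :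
        ∃ u' ∈ T (x +ᵥ K₀), u' ≠ vs + ((B + A) / B) • (q - vs) := by
      rcases eq_or_ne u₁ (vs + ((B + A) / B) • (q - vs)) with h | h
      · exact ⟨u₂, hu₂, by rw [← h]; exact hu12.symm⟩
      · exact ⟨u₁, hu₁, h⟩
    have := strict_tri hBpos hApos (hboundy vs hvs) (hboundx u' hu') hubad
    calc infDist vs (T (x +ᵥ K₀)) ≤ dist vs u' := infDist_le_dist_of_mem hu'
      _ < A + B := by linarith
  have hDle : D ≤ max (infDist us (T (y +ᵥ K₀))) (infDist vs (T (x +ᵥ K₀))) := by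
    apply hausdorffDist_le_of_infDist
    · exact le_trans infDist_nonneg (le_max_left _ _)
    · exact fun u hu => le_trans (hmaxu hu) (le_max_left _ _)
    · exact fun v hv => le_trans (hmaxv hv) (le_max_right _ _)
  have : D < A + B := lt_of_le_of_lt hDle (max_lt h1 h2)
  linarith
end
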